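/- arXiv:1712.07432 — 7 statements merged into one kernel-verified Lean document; each statement's English description precedes it below -/
import Mathlib

section
/- Let H be a central essential arrangement in a finite-dimensional real vector space V. Then every hyperplane H ∈ H is spanned by the 1-dimensional flats of H contained in it: for each H ∈ H, the linear span of the union of all 1-dimensional flats l of H with l ⊆ H equals H. (Equivalently, under the canonical identification V ≅ V**, every hyperplane of H is a hyperplane of the double dual arrangement H∨∨.) -/
/-! Basic notions for a (central, essential) arrangement of hyperplanes `H`
in a finite-dimensional real vector space, its faces, flats, the dual
arrangement and its faces, and the big/small dual cones. -/

/-- Two points `x`, `y` lie in the same face of the hyperplane arrangement `H`: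
for every hyperplane `W ∈ H` and every linear functional `f` with kernel `W`,
either `f x · f y > 0` or `f x = f y = 0`. -/
def SameFace {V : Type*} [AddCommGroup V] [Module ℝ V]
    (H : Finset (Submodule ℝ V)) (x y : V) : Prop :=
  ∀ W ∈ H, ∀ f : V →ₗ[ℝ] ℝ, LinearMap.ker f = W →
    (0 < f x * f y ∨ (f x = 0 ∧ f y = 0))

/-- A face of the arrangement `H`: an equivalence class of the relation `SameFace`. -/
def IsFace {V : Type*} [AddCommGroup V] [Module ℝ V]
    (H : Finset (Submodule ℝ V)) (A : Set V) : Prop :=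
  ∃ x : V, A = {y | SameFace H x y}

/-- A chamber is an open face. -/
def IsChamber {V : Type*} [AddCommGroup V] [Module ℝ V] [TopologicalSpace V]
    (H : Finset (Submodule ℝ V)) (A : Set V) : Prop :=
  IsFace H A ∧ IsOpen A

/-- A flat of `H`: an intersection of a subfamily of the hyperplanes
(the empty subfamily gives all of `V`). -/
def IsFlat {V : Type*} [AddCommGroup V] [Module ℝ V]
    (H : Finset (Submodule ℝ V)) (L : Submodule ℝ V) : Prop :=
  ∃ J : Finset (Submodule ℝ V), J ⊆ H ∧ L = J.inf id

/-- Two (continuous) linear functionals `f`, `g` lie in the same face of the dual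
arrangement `H∨`: for every 1-dimensional flat `l` of `H` and every `x ∈ l`,
either `f x · g x > 0` or `f x = g x = 0`. -/
def DualSameFace {V : Type*} [NormedAddCommGroup V] [NormedSpace ℝ V]
    (H : Finset (Submodule ℝ V)) (f g : V →L[ℝ] ℝ) : Prop :=
  ∀ l : Submodule ℝ V, IsFlat H l → Module.finrank ℝ l = 1 →
    ∀ x ∈ l, (0 < f x * g x ∨ (f x = 0 ∧ g x = 0))

/-- A face of the dual arrangement `H∨` in the dual space. -/
def IsDualFace {V : Type*} [NormedAddCommGroup V] [NormedSpace ℝ V]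
    (H : Finset (Submodule ℝ V)) (A : Set (V →L[ℝ] ℝ)) : Prop :=
  ∃ f : V →L[ℝ] ℝ, A = {g | DualSameFace H f g}

/-- A chamber of the dual arrangement: an open dual face. -/
def IsDualChamber {V : Type*} [NormedAddCommGroup V] [NormedSpace ℝ V]
    (H : Finset (Submodule ℝ V)) (A : Set (V →L[ℝ] ℝ)) : Prop :=
  IsDualFace H A ∧ IsOpen A

/-- The big dual cone `U(A∨)` of a dual face `A∨`. -/
def bigCone {V : Type*} [NormedAddCommGroup V] [NormedSpace ℝ V]
    (A : Set (V →L[ℝ] ℝ)) : Set V :=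
  {x | ∀ f ∈ A, 0 ≤ f x}

/-- The small dual cone `V(A∨)` of a dual face `A∨`: the intersection of the big
dual cones of all dual chambers `B∨` with `A∨ ≤ B∨`. -/
def smallCone {V : Type*} [NormedAddCommGroup V] [NormedSpace ℝ V]
    (H : Finset (Submodule ℝ V)) (A : Set (V →L[ℝ] ℝ)) : Set V :=
  ⋂ B ∈ {B : Set (V →L[ℝ] ℝ) | IsDualChamber H B ∧ A ⊆ closure B}, bigCone B

section StatementZeroAux
open Module

variable {V : Type*} [NormedAddCommGroup V] [NormedSpace ℝ V] [FiniteDimensional ℝ V]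

open Classical in
lemma flat_inf {H : Finset (Submodule ℝ V)} {L W : Submodule ℝ V}
    (hL : IsFlat H L) (hW : W ∈ H) : IsFlat H (L ⊓ W) := by
  obtain ⟨J, hJ, rfl⟩ := hL
  exact ⟨insert W J, Finset.insert_subset hW hJ, by rw [Finset.inf_insert, inf_comm]; rfl⟩

lemma hyperplane_rank {W : Submodule ℝ V} (f : V →ₗ[ℝ] ℝ) (hf : f ≠ 0)
    (hker : LinearMap.ker f = W) : finrank ℝ W + 1 = finrank ℝ V := by
  have hr : LinearMap.range f = ⊤ := by
    rcases eq_bot_or_eq_top (LinearMap.range f) with h | h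
    · exact absurd (LinearMap.range_eq_bot.mp h) hf
    · exact h
  have := LinearMap.finrank_range_add_finrank_ker f
  rw [hr, hker] at this
  rw [finrank_top ℝ ℝ, finrank_self ℝ] at this; omega

lemma sup_hyper_top {W L : Submodule ℝ V} (f : V →ₗ[ℝ] ℝ) (hf : f ≠ 0)
    (hker : LinearMap.ker f = W) (hnle : ¬ L ≤ W) : L ⊔ W = ⊤ := by
  have h1 : finrank ℝ W + 1 = finrank ℝ V := hyperplane_rank f hf hker
  have hlt : W < L ⊔ W := lt_of_le_of_ne le_sup_right (fun h => hnle (h ▸ le_sup_left))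
  have h2 : finrank ℝ W < finrank ℝ (L ⊔ W : Submodule ℝ V) :=
    Submodule.finrank_lt_finrank_of_lt hlt
  apply Submodule.eq_top_of_finrank_eq
  have h3 : finrank ℝ (L ⊔ W : Submodule ℝ V) ≤ finrank ℝ V := Submodule.finrank_le _
  omega

lemma inf_hyper_rank {W L : Submodule ℝ V} (f : V →ₗ[ℝ] ℝ) (hf : f ≠ 0)
    (hker : LinearMap.ker f = W) (hnle : ¬ L ≤ W) :
    finrank ℝ (L ⊓ W : Submodule ℝ V) + 1 = finrank ℝ L := by
  have h1 : finrank ℝ W + 1 = finrank ℝ V := hyperplane_rank f hf hker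
  have h2 := Submodule.finrank_sup_add_finrank_inf_eq L W
  rw [sup_hyper_top f hf hker hnle, finrank_top] at h2
  omega




variable {V : Type*} [NormedAddCommGroup V] [NormedSpace ℝ V] [FiniteDimensional ℝ V]

lemma main_flat (H : Finset (Submodule ℝ V))
    (hHyp : ∀ W ∈ H, ∃ f : V →ₗ[ℝ] ℝ, f ≠ 0 ∧ LinearMap.ker f = W)
    (hEss' : H.inf id = ⊥) :
    ∀ n (L : Submodule ℝ V), finrank ℝ L ≤ n → IsFlat H L →
      Submodule.span ℝ
        (⋃ l ∈ {l : Submodule ℝ V | IsFlat H l ∧ finrank ℝ l = 1 ∧ l ≤ L},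
          (l : Set V)) = L := by
  classical
  intro n
  induction n with
  | zero =>
    intro L hL _
    have hbot : L = ⊥ := Submodule.finrank_eq_zero.mp (Nat.le_zero.mp hL)
    apply le_antisymm
    · rw [Submodule.span_le]
      exact Set.iUnion₂_subset fun l hl => by exact_mod_cast hl.2.2
    · exact hbot ▸ bot_le
  | succ n ih =>
    intro L hL hflat
    rcases Nat.lt_or_ge (finrank ℝ L) (n+1) with h | h
    · exact ih L (Nat.lt_succ_iff.mp h) hflat
    have hrank : finrank ℝ L = n + 1 := le_antisymm hL h
    apply le_antisymm
    · rw [Submodule.span_le]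
      exact Set.iUnion₂_subset fun l hl => by exact_mod_cast hl.2.2
    rcases Nat.eq_zero_or_pos n with rfl | hn
    · -- finrank L = 1, L itself is a 1-dim flat
      intro x hx
      apply Submodule.subset_span
      exact Set.mem_biUnion (show L ∈ {l : Submodule ℝ V | IsFlat H l ∧ finrank ℝ l = 1 ∧ l ≤ L} from ⟨hflat, hrank, le_rfl⟩) hx
    · -- finrank L ≥ 2
      set F := H.filter (fun W => ¬ L ≤ W) with hF
      set T := F.sup (fun W => L ⊓ W) with hT
      have hTle : ∀ W ∈ F, L ⊓ W ≤ T := fun W hW => Finset.le_sup hW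
      have hrkinf : ∀ W ∈ F, finrank ℝ (L ⊓ W : Submodule ℝ V) = n := by
        intro W hW
        rw [Finset.mem_filter] at hW
        obtain ⟨f, hf, hker⟩ := hHyp W hW.1
        have := inf_hyper_rank f hf hker hW.2
        omega
      have hTS : T ≤ Submodule.span ℝ
          (⋃ l ∈ {l : Submodule ℝ V | IsFlat H l ∧ finrank ℝ l = 1 ∧ l ≤ L},
            (l : Set V)) := by
        apply Finset.sup_le
        intro W hW
        rw [Finset.mem_filter] at hW
        have hflatW : IsFlat H (L ⊓ W) := flat_inf hflat hW.1
        have := ih (L ⊓ W) (by rw [hrkinf W (by rw [Finset.mem_filter]; exact hW)]) hflatW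
        rw [← this]
        apply Submodule.span_mono
        apply Set.iUnion₂_mono'
        intro l hl
        exact ⟨l, ⟨hl.1, hl.2.1, hl.2.2.trans inf_le_left⟩, le_rfl⟩
      refine le_trans ?_ hTS
      -- show L ≤ T
      have hTleL : T ≤ L := Finset.sup_le fun W _ => inf_le_left
      by_contra hcon
      have hne : T ≠ L := fun h => hcon (h ▸ le_rfl)
      have hTlt : finrank ℝ T < finrank ℝ L :=
        Submodule.finrank_lt_finrank_of_lt (lt_of_le_of_ne hTleL hne)
      have hW0 : ∃ W0 ∈ H, ¬ L ≤ W0 := by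
        by_contra hall
        push_neg at hall
        have : L ≤ H.inf id := Finset.le_inf fun W hW => hall W hW
        rw [hEss'] at this
        have : finrank ℝ L = 0 := by
          rw [le_bot_iff.mp this]; exact finrank_bot ℝ V
        omega
      obtain ⟨W0, hW0H, hW0⟩ := hW0
      have hW0F : W0 ∈ F := Finset.mem_filter.mpr ⟨hW0H, hW0⟩
      have hTrk : finrank ℝ T = n := by
        have h1 : finrank ℝ (L ⊓ W0 : Submodule ℝ V) = n := hrkinf W0 hW0F
        have h2 : finrank ℝ (L ⊓ W0 : Submodule ℝ V) ≤ finrank ℝ T :=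
          Submodule.finrank_mono (hTle W0 hW0F)
        omega
      have hTbot : T ≤ H.inf id := by
        apply Finset.le_inf
        intro W hW
        by_cases hLW : L ≤ W
        · exact le_trans hTleL hLW
        · have hWF : W ∈ F := Finset.mem_filter.mpr ⟨hW, hLW⟩
          have heq : L ⊓ W = T := by
            apply Submodule.eq_of_le_of_finrank_le (hTle W hWF)
            rw [hTrk, hrkinf W hWF]
          exact le_trans (heq ▸ inf_le_right : T ≤ W) le_rfl
      rw [hEss'] at hTbot
      have : finrank ℝ T = 0 := by
        rw [le_bot_iff.mp hTbot]; exact finrank_bot ℝ V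
      omega




end StatementZeroAux

/-- In a central essential arrangement, every hyperplane `W ∈ H` is
spanned by the 1-dimensional flats of `H` contained in it. -/
theorem statement0 {V : Type*} [NormedAddCommGroup V] [NormedSpace ℝ V]
    [FiniteDimensional ℝ V] (H : Finset (Submodule ℝ V))
    (hHyp : ∀ W ∈ H, ∃ f : V →ₗ[ℝ] ℝ, f ≠ 0 ∧ LinearMap.ker f = W)
    (hEss : (⋂ W ∈ H, (W : Set V)) = {0}) :
    ∀ W ∈ H,
      Submodule.span ℝ
        (⋃ l ∈ {l : Submodule ℝ V | IsFlat H l ∧ Module.finrank ℝ l = 1 ∧ l ≤ W},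
          (l : Set V)) = W := by
  classical
  intro W hW
  have hEss' : H.inf id = ⊥ := by
    rw [eq_bot_iff]
    intro x hx
    have hx' : ∀ U ∈ H, x ∈ U := Submodule.mem_finsetInf.mp hx
    have : x ∈ (⋂ U ∈ H, (U : Set V)) := Set.mem_iInter₂.mpr hx'
    rw [hEss] at this
    simpa using this
  have hflatW : IsFlat H W := ⟨{W}, by simpa using hW, by simp⟩
  exact main_flat H hHyp hEss' (Module.finrank ℝ W) W le_rfl hflatW
end

section
/- For every face A∨ of the dual arrangement H∨, the big dual cone U(A∨) equals the union of the small dual cones V(B∨) over all faces B∨ of H∨ with A∨ ≤ B∨ (and this also equals the union of the U(B∨) over all B∨ with A∨ ≤ B∨). -/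
/-!
A face of the dual arrangement is cut out by the signs of a functional on chosen generators
`v i` of the lines of `H`. By Farkas' lemma its big dual cone is the closure of the cone of
combinations `∑ a i • v i` whose coefficients agree in sign with the face, the coefficients on
lines where the face vanishes being free. The part of such a combination along those lines can
be rewritten with coefficients `h (v i)` for a single functional `h`; moving the face slightly
towards a generic perturbation of `h` gives a chamber above the face whose sign cone still
contains the combination. Only finitely many sign vectors occur, so passing to closures shows
that the big dual cone of a face is the union of the big dual cones of the chambers above it,
and the small dual cone of a chamber is its big dual cone because it is the only chamber above
itself.
-/

open Filter Topology

theorem sign_eq_sign_iff_mul_pos_or {a b : ℝ} :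
    SignType.sign a = SignType.sign b ↔ 0 < a * b ∨ (a = 0 ∧ b = 0) := by
  rcases lt_trichotomy a 0 with ha | rfl | ha <;> rcases lt_trichotomy b 0 with hb | rfl | hb <;>
    simp_all [sign_neg, sign_pos, mul_pos_of_neg_of_neg, ne_of_gt, ne_of_lt,
      (mul_neg_of_neg_of_pos _ _).not_gt, (mul_neg_of_pos_of_neg _ _).not_gt]

theorem eventually_sign_add_mul (a b : ℝ) :
    ∀ᶠ t in 𝓝[>] (0 : ℝ),
      SignType.sign (a + t * b) = if a = 0 then SignType.sign b else SignType.sign a := by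
  by_cases ha : a = 0
  · filter_upwards [self_mem_nhdsWithin] with t (ht : 0 < t)
    simp [ha, sign_mul, sign_pos ht]
  · have hcont : ContinuousAt (fun t : ℝ => SignType.sign (a + t * b)) 0 :=
      (continuousAt_sign_of_ne_zero (by simpa using ha)).comp (by fun_prop)
    have hev := Filter.tendsto_pure.mp (nhds_discrete SignType ▸ hcont.tendsto)
    filter_upwards [nhdsWithin_le_nhds hev] with t ht
    simpa [ha] using ht

theorem isClosed_bigCone {V : Type*} [NormedAddCommGroup V] [NormedSpace ℝ V]
    (A : Set (V →L[ℝ] ℝ)) : IsClosed (bigCone A) := by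
  rw [show bigCone A = ⋂ f ∈ A, {x | 0 ≤ f x} by ext; simp [bigCone]]
  exact isClosed_biInter fun f _ => isClosed_le continuous_const f.continuous

theorem bigCone_anti {V : Type*} [NormedAddCommGroup V] [NormedSpace ℝ V]
    {A B : Set (V →L[ℝ] ℝ)} (h : A ⊆ closure B) : bigCone B ⊆ bigCone A :=
  fun x hx _ hf => closure_minimal (s := B) (t := {g | 0 ≤ g x}) hx
    (isClosed_le continuous_const (ContinuousLinearMap.apply ℝ ℝ x).continuous) (h hf)

/-- The range of `h ↦ ∑ i ∈ s, h (v i) • v i` is the whole span of the `v i`: a functional `g`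
vanishing on it satisfies `∑ i ∈ s, g (v i) ^ 2 = 0`. -/
theorem exists_eq_sum_apply_smul {V : Type*} [NormedAddCommGroup V] [NormedSpace ℝ V]
    [FiniteDimensional ℝ V] {ι : Type*} (v : ι → V) (s : Finset ι) {z : V}
    (hz : z ∈ Submodule.span ℝ (v '' s)) : ∃ h : V →L[ℝ] ℝ, z = ∑ i ∈ s, h (v i) • v i := by
  let T : (V →L[ℝ] ℝ) →ₗ[ℝ] V :=
    ∑ i ∈ s, (ContinuousLinearMap.apply ℝ ℝ (v i) : (V →L[ℝ] ℝ) →ₗ[ℝ] ℝ).smulRight (v i)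
  have hT : ∀ h, T h = ∑ i ∈ s, h (v i) • v i := fun h => by simp [T]
  by_contra hne
  have hzT : z ∉ LinearMap.range T := by
    rintro ⟨h, rfl⟩
    exact hne ⟨h, hT h⟩
  obtain ⟨g, hgz, hTg⟩ := Submodule.exists_le_ker_of_notMem hzT
  have hsq : ∑ i ∈ s, g (v i) * g (v i) = 0 := by
    simpa [hT, map_sum] using hTg ⟨LinearMap.toContinuousLinearMap g, rfl⟩
  have hgv : ∀ i ∈ s, g (v i) = 0 := fun i hi =>
    mul_self_eq_zero.1 ((Finset.sum_eq_zero_iff_of_nonneg fun j _ => mul_self_nonneg _).1 hsq i hi)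
  have hspan : Submodule.span ℝ (v '' s) ≤ LinearMap.ker g :=
    Submodule.span_le.2 (by rintro _ ⟨i, hi, rfl⟩; exact hgv i hi)
  exact hgz (hspan hz)

section SignVectors

variable {V : Type*} [NormedAddCommGroup V] [NormedSpace ℝ V] {ι : Type*} (v : ι → V)

noncomputable def signVec (f : V →L[ℝ] ℝ) : ι → SignType := fun i => SignType.sign (f (v i))

def signFace (f : V →L[ℝ] ℝ) : Set (V →L[ℝ] ℝ) := {g | signVec v g = signVec v f}

/-- Composition of sign vectors as in oriented matroids; the face order `σ ≤ τ` is expressed as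
`composeSigns σ τ = τ`. -/
def composeSigns (σ τ : ι → SignType) : ι → SignType := fun i => if σ i = 0 then τ i else σ i

theorem composeSigns_left_idem (σ τ : ι → SignType) :
    composeSigns σ (composeSigns σ τ) = composeSigns σ τ := by
  funext i
  by_cases h : σ i = 0 <;> simp [composeSigns, h]

theorem composeSigns_ne_zero {σ τ : ι → SignType} (hτ : ∀ i, τ i ≠ 0) (i : ι) :
    composeSigns σ τ i ≠ 0 := by
  by_cases h : σ i = 0 <;> simp [composeSigns, h, hτ i]

theorem eventually_signVec_add_smul [Finite ι] (f g : V →L[ℝ] ℝ) :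
    ∀ᶠ t in 𝓝[>] (0 : ℝ), signVec v (f + t • g) = composeSigns (signVec v f) (signVec v g) := by
  filter_upwards [eventually_all.2 fun i => eventually_sign_add_mul (f (v i)) (g (v i))]
    with t ht
  funext i
  simpa [signVec, composeSigns, sign_eq_zero_iff] using ht i

theorem mem_closure_signFace [Finite ι] {f g : V →L[ℝ] ℝ}
    (h : composeSigns (signVec v g) (signVec v f) = signVec v f) :
    g ∈ closure (signFace v f) := by
  have hcont : Continuous fun t : ℝ => g + t • f := by fun_prop
  have hlim : Tendsto (fun t : ℝ => g + t • f) (𝓝[>] 0) (𝓝 g) := by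
    simpa using (hcont.tendsto 0).mono_left nhdsWithin_le_nhds
  exact mem_closure_of_tendsto hlim <| (eventually_signVec_add_smul v g f).mono
    fun t ht => show signVec v _ = _ by rw [ht, h]

theorem signFace_subset_closure [Finite ι] {f f₁ : V →L[ℝ] ℝ}
    (h : composeSigns (signVec v f) (signVec v f₁) = signVec v f₁) :
    signFace v f ⊆ closure (signFace v f₁) := fun g hg =>
  mem_closure_signFace v (by rwa [hg.out])

theorem isOpen_signFace [Finite ι] {f : V →L[ℝ] ℝ} (hf : ∀ i, signVec v f i ≠ 0) :
    IsOpen (signFace v f) := by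
  refine isOpen_iff_mem_nhds.2 fun g hg => ?_
  have hg0 : ∀ i, g (v i) ≠ 0 := fun i => sign_ne_zero.1 (hg.out ▸ hf i : signVec v g i ≠ 0)
  have hev : ∀ i, ∀ᶠ g' in 𝓝 g, SignType.sign (g' (v i)) = SignType.sign (g (v i)) := fun i =>
    Filter.tendsto_pure.1 <| nhds_discrete SignType ▸
      (ContinuousAt.comp (f := fun g' : V →L[ℝ] ℝ => g' (v i))
        (continuousAt_sign_of_ne_zero (hg0 i)) (by fun_prop)).tendsto
  filter_upwards [eventually_all.2 hev] with g' hg'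
  exact (funext hg').trans hg.out

theorem signFace_eq_of_mem_closure [Finite ι] {f g : V →L[ℝ] ℝ} (hf : ∀ i, signVec v f i ≠ 0)
    (h : f ∈ closure (signFace v g)) : signFace v g = signFace v f := by
  obtain ⟨k, hkf, hkg⟩ := mem_closure_iff.1 h _ (isOpen_signFace v hf) rfl
  rw [signFace, ← hkg.out, hkf.out, signFace]

theorem exists_forall_apply_ne_zero [Finite ι] (hv : ∀ i, v i ≠ 0) :
    ∃ k : V →L[ℝ] ℝ, ∀ i, k (v i) ≠ 0 := by
  have := Fintype.ofFinite ι
  let p : ι → Submodule ℝ (V →L[ℝ] ℝ) := fun i =>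
    LinearMap.ker (ContinuousLinearMap.apply ℝ ℝ (v i) : (V →L[ℝ] ℝ) →ₗ[ℝ] ℝ)
  have hp : ∀ i, p i ≠ ⊤ := fun i hi => by
    obtain ⟨k, hk⟩ := SeparatingDual.exists_ne_zero (R := ℝ) (hv i)
    exact hk (LinearMap.mem_ker.1 (hi ▸ Submodule.mem_top : k ∈ p i))
  obtain ⟨k, -, hk⟩ := Set.exists_of_ssubset <|
    Submodule.iUnion_ssubset_of_forall_ne_top_of_card_lt Finset.univ p hp (by simp)
  exact ⟨k, fun i hi => hk (Set.mem_biUnion (Finset.mem_univ i) hi)⟩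

theorem exists_chamber_ge [Finite ι] (hv : ∀ i, v i ≠ 0) (f : V →L[ℝ] ℝ) :
    ∃ f₁ : V →L[ℝ] ℝ, (∀ i, signVec v f₁ i ≠ 0) ∧
      composeSigns (signVec v f) (signVec v f₁) = signVec v f₁ := by
  obtain ⟨k, hk⟩ := exists_forall_apply_ne_zero v hv
  obtain ⟨t, ht⟩ := (eventually_signVec_add_smul v f k).exists
  refine ⟨f + t • k, ?_, ?_⟩
  · rw [ht]
    exact composeSigns_ne_zero fun i => sign_ne_zero.2 (hk i)
  · rw [ht, composeSigns_left_idem]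

end SignVectors

section SignCones

variable {V : Type*} [NormedAddCommGroup V] [NormedSpace ℝ V] {ι : Type*} [Fintype ι] (v : ι → V)

def signCone (σ : ι → SignType) : PointedCone ℝ V where
  carrier := {y | ∃ a : ι → ℝ, (∀ i, 0 ≤ a i * σ i) ∧ y = ∑ i, a i • v i}
  zero_mem' := ⟨0, by simp, by simp⟩
  add_mem' := by
    rintro _ _ ⟨a, ha, rfl⟩ ⟨b, hb, rfl⟩
    exact ⟨a + b, fun i => by simpa [add_mul] using add_nonneg (ha i) (hb i),
      by simp [add_smul, Finset.sum_add_distrib]⟩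
  smul_mem' := by
    rintro ⟨c, hc⟩ _ ⟨a, ha, rfl⟩
    exact ⟨c • a, fun i => by simpa [mul_assoc] using mul_nonneg hc (ha i),
      by simp [Finset.smul_sum, smul_smul]⟩

theorem smul_mem_signCone {σ : ι → SignType} {c : ℝ} {i : ι} (h : 0 ≤ c * σ i) :
    c • v i ∈ signCone v σ := by
  classical
  refine ⟨Pi.single i c, fun j => ?_, by simp [Pi.single_apply]⟩
  rcases eq_or_ne j i with rfl | hj
  · simpa using h
  · simp [hj]

theorem signCone_subset_bigCone (f : V →L[ℝ] ℝ) :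
    (signCone v (signVec v f) : Set V) ⊆ bigCone (signFace v f) := by
  rintro _ ⟨a, ha, rfl⟩ g hg
  rw [map_sum]
  refine Finset.sum_nonneg fun i _ => ?_
  have hgi : SignType.sign (g (v i)) = SignType.sign (f (v i)) := congrFun hg.out i
  rw [map_smul, smul_eq_mul, ← sign_mul_abs (g (v i)), hgi, ← mul_assoc]
  exact mul_nonneg (ha i) (abs_nonneg _)

theorem bigCone_signFace_subset_closure_signCone (f : V →L[ℝ] ℝ) :
    bigCone (signFace v f) ⊆ closure (signCone v (signVec v f)) := by
  intro x hx
  by_contra hxK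
  let C : ProperCone ℝ V := ⟨(signCone v (signVec v f)).closure, isClosed_closure⟩
  obtain ⟨g, hgC, hgx⟩ := C.hyperplane_separation_point (x₀ := x) hxK
  have hg : ∀ (c : ℝ) i, 0 ≤ c * SignType.sign (f (v i)) → 0 ≤ c * g (v i) := fun c i h => by
    simpa using hgC _ (subset_closure (smul_mem_signCone v h))
  have hcomp : composeSigns (signVec v g) (signVec v f) = signVec v f := by
    funext i
    by_cases hgi : g (v i) = 0
    · simp [composeSigns, signVec, hgi]
    by_cases hfi : f (v i) = 0
    · have h₁ := hg 1 i (by simp [hfi])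
      have h₂ := hg (-1) i (by simp [hfi])
      exact absurd (le_antisymm (by linarith) (by linarith)) hgi
    have hpos : 0 < f (v i) * g (v i) := lt_of_le_of_ne
      (hg (f (v i)) i (by rw [self_mul_sign]; exact abs_nonneg _))
      (mul_ne_zero hfi hgi).symm
    simp [composeSigns, signVec, (sign_eq_sign_iff_mul_pos_or.2 (Or.inl hpos)).symm]
  exact hgx.not_ge (bigCone_anti subset_rfl hx g (mem_closure_signFace v hcomp))

theorem exists_chamber_ge_mem_signCone [FiniteDimensional ℝ V] (hv : ∀ i, v i ≠ 0)
    {f₀ : V →L[ℝ] ℝ} {y : V} (hy : y ∈ signCone v (signVec v f₀)) :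
    ∃ f₁ : V →L[ℝ] ℝ, (∀ i, signVec v f₁ i ≠ 0) ∧
      composeSigns (signVec v f₀) (signVec v f₁) = signVec v f₁ ∧
      y ∈ signCone v (signVec v f₁) := by
  classical
  obtain ⟨a, ha, rfl⟩ := hy
  set Z := Finset.univ.filter fun i => f₀ (v i) = 0
  obtain ⟨h, hh⟩ := exists_eq_sum_apply_smul v Z (z := ∑ i ∈ Z, a i • v i)
    (Submodule.sum_mem _ fun i hi => Submodule.smul_mem _ _ (Submodule.subset_span ⟨i, hi, rfl⟩))
  obtain ⟨g, hg0, hgh⟩ := exists_chamber_ge v hv h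
  obtain ⟨t, ht⟩ := (eventually_signVec_add_smul v f₀ g).exists
  refine ⟨f₀ + t • g, ht ▸ composeSigns_ne_zero hg0, by rw [ht, composeSigns_left_idem], ?_⟩
  refine ⟨fun i => if f₀ (v i) = 0 then h (v i) else a i, fun i => ?_, ?_⟩
  · rw [ht]
    by_cases hf : f₀ (v i) = 0
    · have hgi := congrFun hgh i
      by_cases hhi : h (v i) = 0
      · simp [hf, hhi]
      · simp only [composeSigns, signVec, sign_eq_zero_iff, hhi, if_false] at hgi
        simp [composeSigns, signVec, hf, ← hgi]
    · have := ha i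
      simp_all [composeSigns, signVec]
  · rw [← Finset.sum_filter_add_sum_filter_not Finset.univ (fun i => f₀ (v i) = 0),
      ← Finset.sum_filter_add_sum_filter_not Finset.univ (fun i => f₀ (v i) = 0)]
    change ∑ i ∈ Z, _ + _ = ∑ i ∈ Z, _ + _
    rw [hh]
    congr 1 <;> refine Finset.sum_congr rfl fun i hi => ?_ <;> simp_all [Z]

theorem exists_chamber_ge_mem_bigCone [FiniteDimensional ℝ V] (hv : ∀ i, v i ≠ 0)
    {f₀ : V →L[ℝ] ℝ} {x : V} (hx : x ∈ bigCone (signFace v f₀)) :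
    ∃ f₁ : V →L[ℝ] ℝ, (∀ i, signVec v f₁ i ≠ 0) ∧
      composeSigns (signVec v f₀) (signVec v f₁) = signVec v f₁ ∧
      x ∈ bigCone (signFace v f₁) := by
  let S : Set (ι → SignType) := {σ | ∃ f₁ : V →L[ℝ] ℝ, (∀ i, σ i ≠ 0) ∧
      composeSigns (signVec v f₀) σ = σ ∧ signVec v f₁ = σ}
  have hcover : (signCone v (signVec v f₀) : Set V) ⊆ ⋃ σ ∈ S, signCone v σ := fun y hy => by
    obtain ⟨f₁, h₁, h₂, hy₁⟩ := exists_chamber_ge_mem_signCone v hv hy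
    exact Set.mem_biUnion ⟨f₁, h₁, h₂, rfl⟩ hy₁
  have hx' := closure_mono hcover (bigCone_signFace_subset_closure_signCone v f₀ hx)
  rw [S.toFinite.closure_biUnion] at hx'
  obtain ⟨σ, ⟨f₁, h₁, h₂, rfl⟩, hxσ⟩ := Set.mem_iUnion₂.1 hx'
  exact ⟨f₁, h₁, h₂, closure_minimal (signCone_subset_bigCone v f₁) (isClosed_bigCone _) hxσ⟩

end SignCones

universe u

theorem exists_signFace_eq_dualFace {V : Type u} [NormedAddCommGroup V] [NormedSpace ℝ V]
    (H : Finset (Submodule ℝ V)) :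
    ∃ (ι : Type u) (_ : Fintype ι) (v : ι → V), (∀ i, v i ≠ 0) ∧
      ∀ f, {g | DualSameFace H f g} = signFace v f := by
  classical
  let L : Set (Submodule ℝ V) := {l | IsFlat H l ∧ Module.finrank ℝ l = 1}
  have hL : L.Finite := (H.powerset.image fun J => J.inf id).finite_toSet.subset
    fun l ⟨⟨J, hJ, hl⟩, _⟩ => by simpa using ⟨J, hJ, hl.symm⟩
  have := hL.to_subtype
  choose w hw0 hw using fun l : L => finrank_eq_one_iff'.1 l.2.2
  refine ⟨L, Fintype.ofFinite L, fun l => w l, fun l => by simpa using hw0 l, fun f => ?_⟩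
  ext g
  simp only [signFace, signVec, Set.mem_ofPred_eq, funext_iff]
  refine ⟨fun hfg l => (sign_eq_sign_iff_mul_pos_or.2
    (hfg l l.2.1 l.2.2 (w l) (w l).2)).symm, fun hfg l hflat hrank x hx => ?_⟩
  obtain ⟨c, hc⟩ := hw ⟨l, hflat, hrank⟩ ⟨x, hx⟩
  rw [← sign_eq_sign_iff_mul_pos_or,
    ← show c • (w ⟨l, hflat, hrank⟩ : V) = x from congrArg Subtype.val hc,
    f.map_smul, g.map_smul, smul_eq_mul, smul_eq_mul, sign_mul, sign_mul, hfg]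

theorem statement4_general {V : Type*} [NormedAddCommGroup V] [NormedSpace ℝ V]
    [FiniteDimensional ℝ V] (H : Finset (Submodule ℝ V))
    (A : Set (V →L[ℝ] ℝ)) (hA : IsDualFace H A) :
    bigCone A =
      (⋃ B ∈ {B : Set (V →L[ℝ] ℝ) | IsDualFace H B ∧ A ⊆ closure B}, smallCone H B) ∧
    bigCone A =
      (⋃ B ∈ {B : Set (V →L[ℝ] ℝ) | IsDualFace H B ∧ A ⊆ closure B}, bigCone B) := by
  obtain ⟨ι, _, v, hv, hface⟩ := exists_signFace_eq_dualFace H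
  have hIsFace : ∀ B, IsDualFace H B ↔ ∃ f, B = signFace v f := by simp [IsDualFace, hface]
  obtain ⟨f₀, rfl⟩ := hA
  rw [hface]
  refine ⟨Set.Subset.antisymm (fun x hx => ?_) (fun x hx => ?_),
    Set.Subset.antisymm (fun x hx => ?_) (fun x hx => ?_)⟩
  · obtain ⟨f₁, hch, hle, hx₁⟩ := exists_chamber_ge_mem_bigCone v hv hx
    refine Set.mem_biUnion ⟨(hIsFace _).2 ⟨f₁, rfl⟩, signFace_subset_closure v hle⟩ <|
      Set.mem_iInter₂.2 fun C ⟨⟨hC, _⟩, hC'⟩ => ?_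
    obtain ⟨g, rfl⟩ := (hIsFace C).1 hC
    rwa [signFace_eq_of_mem_closure v hch (hC' rfl)]
  · obtain ⟨B, ⟨hB, hAB⟩, hxB⟩ := Set.mem_iUnion₂.1 hx
    obtain ⟨fB, rfl⟩ := (hIsFace B).1 hB
    obtain ⟨f₁, hch, hle⟩ := exists_chamber_ge v hv fB
    have hx₁ := Set.mem_iInter₂.1 hxB (signFace v f₁)
      ⟨⟨(hIsFace _).2 ⟨f₁, rfl⟩, isOpen_signFace v hch⟩, signFace_subset_closure v hle⟩
    exact bigCone_anti hAB (bigCone_anti (signFace_subset_closure v hle) hx₁)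
  · exact Set.mem_biUnion ⟨(hIsFace _).2 ⟨f₀, rfl⟩, subset_closure⟩ hx
  · obtain ⟨B, ⟨-, hAB⟩, hxB⟩ := Set.mem_iUnion₂.1 hx
    exact bigCone_anti hAB hxB

/-- For every face `A∨` of the dual arrangement,
`U(A∨) = ⋃_{B∨ ≥ A∨} V(B∨) = ⋃_{B∨ ≥ A∨} U(B∨)`. -/
theorem statement4 {V : Type*} [NormedAddCommGroup V] [NormedSpace ℝ V]
    [FiniteDimensional ℝ V] (H : Finset (Submodule ℝ V))
    (hHyp : ∀ W ∈ H, ∃ f : V →ₗ[ℝ] ℝ, f ≠ 0 ∧ LinearMap.ker f = W)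
    (hEss : (⋂ W ∈ H, (W : Set V)) = {0})
    (A : Set (V →L[ℝ] ℝ)) (hA : IsDualFace H A) :
    bigCone A =
      (⋃ B ∈ {B : Set (V →L[ℝ] ℝ) | IsDualFace H B ∧ A ⊆ closure B}, smallCone H B) ∧
    bigCone A =
      (⋃ B ∈ {B : Set (V →L[ℝ] ℝ) | IsDualFace H B ∧ A ⊆ closure B}, bigCone B) :=
  statement4_general H A hA
end

section
/- Let A∨ be a face of the dual arrangement H∨ and B a face of H, and let π : V* → V*⧸span(A∨) be the quotient by the linear span of A∨. Then there exists a subset K of V*⧸span(A∨) that is closed, convex, and stable under multiplication by positive real scalars, such that: (i) for every face B∨ of H∨ with A∨ ≤ B∨, one has B ⊆ U(B∨) if and only if π(B∨) ⊆ K; and (ii) K is the whole quotient space V*⧸span(A∨) if and only if B ⊆ V(A∨). -/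
/-!
The closure `B̄` of the face `B` is a pointed polyhedral cone, so by Krein–Milman on a compact
slice a functional is nonnegative on `B` iff it is nonnegative on the rays of `B̄` that lie in
one-dimensional flats. Every functional of a dual face `B∨ ≥ A∨ = face(f₀)` has the strict sign of
`f₀` on those rays where `f₀ ≠ 0`, so `B ⊆ U(B∨)` only depends on the values of `B∨` on the rays
of `B̄` killed by `f₀`, which are killed by all of `span A∨`. Thus `K` is the image of
`{g | g ≥ 0 on the rays of B̄ where f₀ = 0}` when `f₀ ≥ 0` on all rays of `B̄`, and `K = ∅`
otherwise. For (ii), perturbing `f₀` by a small generic functional gives a dual chamber above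
`A∨` that is negative at any prescribed ray of `B̄` where `f₀ ≤ 0`.
-/

open Module Set Filter Topology

namespace HyperplaneArrangement

section WeakSide

variable {E : Type*} [AddCommGroup E] [Module ℝ E] {f : E →ₗ[ℝ] ℝ} {e₀ : E}

/-- The closed half-space bounded by `ker f` on the side of `e₀`; it is `ker f` when `f e₀ = 0`. -/
def weakSide (f : E →ₗ[ℝ] ℝ) (e₀ : E) : Set E :=
  {x | 0 ≤ f e₀ * f x ∧ (f e₀ = 0 → f x = 0)}

lemma mem_weakSide_of_sameSign {x : E} (h : 0 < f e₀ * f x ∨ (f e₀ = 0 ∧ f x = 0)) :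
    x ∈ weakSide f e₀ := by
  rcases h with h | ⟨-, h⟩
  · exact ⟨h.le, fun h₀ => by simp [h₀] at h⟩
  · exact ⟨by simp [h], fun _ => h⟩

lemma convex_weakSide : Convex ℝ (weakSide f e₀) := by
  intro x hx y hy a b ha hb _
  simp only [weakSide, mem_ofPred_eq, map_add, map_smul, smul_eq_mul] at hx hy ⊢
  exact ⟨by nlinarith [hx.1, hy.1], fun h₀ => by simp [hx.2 h₀, hy.2 h₀]⟩

lemma smul_mem_weakSide {x : E} (hx : x ∈ weakSide f e₀) {c : ℝ} (hc : 0 ≤ c) :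
    c • x ∈ weakSide f e₀ := by
  simp only [weakSide, mem_ofPred_eq, map_smul, smul_eq_mul] at hx ⊢
  exact ⟨by nlinarith [hx.1], fun h₀ => by simp [hx.2 h₀]⟩

lemma isClosed_weakSide [TopologicalSpace E] (hf : Continuous f) : IsClosed (weakSide f e₀) :=
  (isClosed_le continuous_const (continuous_const.mul hf)).inter
    (isClosed_imp isOpen_const (isClosed_eq hf continuous_const))

lemma weakSide_subset_smul (c : ℝ) : weakSide f e₀ ⊆ weakSide (c • f) e₀ := by
  intro x hx
  simp only [weakSide, mem_ofPred_eq, LinearMap.smul_apply, smul_eq_mul] at hx ⊢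
  refine ⟨by nlinarith [hx.1, mul_self_nonneg c], fun h₀ => ?_⟩
  rcases mul_eq_zero.1 h₀ with hc | h₀
  · simp [hc]
  · simp [hx.2 h₀]

end WeakSide

lemma mul_pos_of_mul_pos_of_mul_pos {α : Type*} [CommRing α] [LinearOrder α]
    [IsStrictOrderedRing α] {a b c : α} (hab : 0 < a * b) (hac : 0 < a * c) : 0 < b * c :=
  pos_of_mul_pos_right (by linarith [mul_pos hab hac] : 0 < (a * a) * (b * c))
    (mul_self_nonneg a)

lemma exists_smul_eq_of_ker_le {K E : Type*} [Field K] [AddCommGroup E] [Module K E]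
    {f g : E →ₗ[K] K} (h : LinearMap.ker g ≤ LinearMap.ker f) : ∃ c : K, c • g = f := by
  have := mem_span_of_iInf_ker_le_ker (L := fun _ : Unit => g) (by simpa using h)
  simpa [Set.range_const, Submodule.mem_span_singleton] using this

lemma exists_smul_eq_of_finrank_eq_one {K E : Type*} [Field K] [AddCommGroup E] [Module K E]
    {l : Submodule K E} (hl : finrank K l = 1) {v : E} (hv : v ∈ l) (hv₀ : v ≠ 0)
    {x : E} (hx : x ∈ l) : ∃ c : K, c • v = x := by
  obtain ⟨c, hc⟩ := (finrank_eq_one_iff_of_nonzero' (⟨v, hv⟩ : l) (by simpa using hv₀)).1 hl ⟨x, hx⟩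
  exact ⟨c, congrArg Subtype.val hc⟩

lemma exists_mem_ne_zero_of_one_lt_finrank {K E : Type*} [Field K] [AddCommGroup E] [Module K E]
    {L : Submodule K E} [FiniteDimensional K L] (hL : 1 < finrank K L) (φ : E →ₗ[K] K) :
    ∃ y ∈ L, y ≠ 0 ∧ φ y = 0 := by
  have hsum := LinearMap.finrank_range_add_finrank_ker (φ.domRestrict L)
  have hrange : finrank K (LinearMap.range (φ.domRestrict L)) ≤ 1 :=
    (Submodule.finrank_le _).trans (finrank_self K).le
  obtain ⟨y, hy, hy₀⟩ := Submodule.exists_mem_ne_zero_of_ne_bot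
    (p := LinearMap.ker (φ.domRestrict L)) fun h => by rw [h, finrank_bot] at hsum; omega
  exact ⟨y, y.2, by simpa using hy₀, hy⟩

lemma isCompact_inter_level_of_pos {E : Type*} [NormedAddCommGroup E] [NormedSpace ℝ E]
    [FiniteDimensional ℝ E] {C : Set E} (hC : IsClosed C)
    (hsmul : ∀ c : ℝ, 0 < c → ∀ z ∈ C, c • z ∈ C) {φ : E →L[ℝ] ℝ}
    (hφ : ∀ z ∈ C, z ≠ 0 → 0 < φ z) : IsCompact (C ∩ {z | φ z = 1}) := by
  obtain ⟨m, hm, hmle⟩ := ((isCompact_sphere (0 : E) 1).inter_left hC).exists_forall_le'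
    φ.continuous.continuousOn fun z hz => hφ z hz.1 (ne_zero_of_mem_unit_sphere ⟨z, hz.2⟩)
  refine Metric.isCompact_of_isClosed_isBounded
    (hC.inter (isClosed_eq φ.continuous continuous_const))
    ((Metric.isBounded_closedBall (x := 0) (r := m⁻¹)).subset fun z ⟨hzC, hz⟩ => ?_)
  have hz₀ : z ≠ 0 := by rintro rfl; simp at hz
  have hnorm : 0 < ‖z‖ := norm_pos_iff.2 hz₀
  have h := hmle (‖z‖⁻¹ • z) ⟨hsmul _ (inv_pos.2 hnorm) z hzC, by simp [norm_smul, hnorm.ne']⟩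
  rw [map_smul, smul_eq_mul, show φ z = 1 from hz, mul_one] at h
  simpa using (le_inv_comm₀ hm hnorm).1 h

section ClosedFace

variable {V : Type*} [NormedAddCommGroup V] [NormedSpace ℝ V] {H : Finset (Submodule ℝ V)}
  {x₀ : V}

/-- The closure of the face of `x₀`. -/
def closedFace (H : Finset (Submodule ℝ V)) (x₀ : V) : Set V :=
  ⋂ W ∈ H, ⋂ (f : V →ₗ[ℝ] ℝ) (_ : LinearMap.ker f = W), weakSide f x₀

lemma mem_closedFace {x : V} :
    x ∈ closedFace H x₀ ↔ ∀ W ∈ H, ∀ f : V →ₗ[ℝ] ℝ, LinearMap.ker f = W → x ∈ weakSide f x₀ := by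
  simp [closedFace]

lemma mem_closedFace_of_sameFace {y : V} (h : SameFace H x₀ y) : y ∈ closedFace H x₀ :=
  mem_closedFace.2 fun W hW f hf => mem_weakSide_of_sameSign (h W hW f hf)

lemma convex_closedFace : Convex ℝ (closedFace H x₀) :=
  convex_iInter₂ fun _ _ => convex_iInter₂ fun _ _ => convex_weakSide

lemma smul_mem_closedFace {x : V} (hx : x ∈ closedFace H x₀) {c : ℝ} (hc : 0 ≤ c) :
    c • x ∈ closedFace H x₀ :=
  mem_closedFace.2 fun W hW f hf => smul_mem_weakSide (mem_closedFace.1 hx W hW f hf) hc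

lemma isClosed_closedFace [FiniteDimensional ℝ V] : IsClosed (closedFace H x₀) :=
  isClosed_biInter fun _ _ => isClosed_iInter fun f => isClosed_iInter fun _ =>
    isClosed_weakSide f.continuous_of_finiteDimensional

lemma closedFace_subset_closure : closedFace H x₀ ⊆ closure {y | SameFace H x₀ y} := by
  intro x hx
  have hface : ∀ t : ℝ, 0 < t → SameFace H x₀ (x + t • x₀) := by
    intro t ht W hW f hf
    obtain ⟨hnonneg, hzero⟩ := mem_closedFace.1 hx W hW f hf
    simp only [map_add, map_smul, smul_eq_mul]
    by_cases h₀ : f x₀ = 0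
    · exact Or.inr ⟨h₀, by simp [h₀, hzero h₀]⟩
    · exact Or.inl (by nlinarith [mul_self_pos.2 h₀])
  have hlim : Tendsto (fun t : ℝ => x + t • x₀) (𝓝[>] 0) (𝓝 x) := by
    have : Continuous fun t : ℝ => x + t • x₀ := by fun_prop
    exact (this.tendsto' 0 x (by simp)).mono_left nhdsWithin_le_nhds
  exact mem_closure_of_tendsto hlim (eventually_nhdsWithin_of_forall hface)

lemma nonneg_on_closedFace_of_nonneg_on_face {g : V →L[ℝ] ℝ}
    (hg : ∀ y, SameFace H x₀ y → 0 ≤ g y) : ∀ x ∈ closedFace H x₀, 0 ≤ g x :=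
  fun _ hx => closure_minimal hg (isClosed_le continuous_const g.continuous)
    (closedFace_subset_closure hx)

def flatRays (H : Finset (Submodule ℝ V)) : Set V :=
  {x | ∃ l, IsFlat H l ∧ finrank ℝ l = 1 ∧ x ∈ l}

variable [FiniteDimensional ℝ V]
  (hHyp : ∀ W ∈ H, ∃ f : V →ₗ[ℝ] ℝ, LinearMap.ker f = W)
include hHyp

/-- `φ = ∑_W f_W(x₀) f_W` is nonnegative on the closed face, and vanishes only on `⋂ H = 0`. -/
lemma exists_pos_on_closedFace (hEss : (⋂ W ∈ H, (W : Set V)) = {0}) (x₀ : V) :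
    ∃ φ : V →L[ℝ] ℝ, ∀ z ∈ closedFace H x₀, z ≠ 0 → 0 < φ z := by
  choose f hf using hHyp
  let φ : V →ₗ[ℝ] ℝ := ∑ W ∈ H.attach, f W.1 W.2 x₀ • f W.1 W.2
  refine ⟨LinearMap.toContinuousLinearMap φ, fun z hz hz₀ => ?_⟩
  have hterm : ∀ W ∈ H.attach, 0 ≤ f W.1 W.2 x₀ * f W.1 W.2 z :=
    fun W _ => (mem_closedFace.1 hz W.1 W.2 _ (hf W.1 W.2)).1
  have hφz : φ z = ∑ W ∈ H.attach, f W.1 W.2 x₀ * f W.1 W.2 z := by simp [φ]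
  rw [LinearMap.coe_toContinuousLinearMap', hφz]
  refine (Finset.sum_nonneg hterm).lt_of_ne fun hsum => hz₀ ?_
  have hmem : ∀ W (hW : W ∈ H), z ∈ W := by
    intro W hW
    have h := (Finset.sum_eq_zero_iff_of_nonneg hterm).1 hsum.symm ⟨W, hW⟩ (Finset.mem_attach _ _)
    rw [← hf W hW, LinearMap.mem_ker]
    rcases mul_eq_zero.1 h with h | h
    · exact (mem_closedFace.1 hz W hW _ (hf W hW)).2 h
    · exact h
  simpa [hEss] using mem_iInter₂.2 hmem

lemma eventually_add_smul_mem_closedFace {z y : V} (hz : z ∈ closedFace H x₀)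
    (hy : ∀ W ∈ H, z ∈ W → y ∈ W) : ∀ᶠ ε in 𝓝 (0 : ℝ), z + ε • y ∈ closedFace H x₀ := by
  choose f hf using hHyp
  have hpos : ∀ W (hW : W ∈ H),
      ∀ᶠ ε in 𝓝 (0 : ℝ), z ∉ W → 0 < f W hW x₀ * f W hW (z + ε • y) := by
    intro W hW
    by_cases hzW : z ∈ W
    · exact Eventually.of_forall fun _ h => (h hzW).elim
    obtain ⟨hnonneg, hzero⟩ := mem_closedFace.1 hz W hW _ (hf W hW)
    have hfz : f W hW z ≠ 0 := fun h => hzW (hf W hW ▸ h)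
    have hcont : Continuous fun ε : ℝ => f W hW x₀ * f W hW (z + ε • y) :=
      continuous_const.mul ((f W hW).continuous_of_finiteDimensional.comp (by fun_prop))
    exact ((hcont.tendsto' 0 _ (by simp)).eventually_const_lt
      (hnonneg.lt_of_ne' (mul_ne_zero (mt hzero hfz) hfz))).mono fun _ h _ => h
  have hall := (eventually_all_finset H.attach).2 fun W _ => hpos W.1 W.2
  filter_upwards [hall] with ε hε
  refine mem_closedFace.2 fun W hW g hg => ?_
  by_cases hzW : z ∈ W
  · have hgz : g z = 0 := by rw [← LinearMap.mem_ker, hg]; exact hzW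
    have hgy : g y = 0 := by rw [← LinearMap.mem_ker, hg]; exact hy W hW hzW
    exact ⟨by simp [hgz, hgy], fun _ => by simp [hgz, hgy]⟩
  · obtain ⟨c, rfl⟩ := exists_smul_eq_of_ker_le (f := g) (g := f W hW) (by rw [hf, hg])
    exact weakSide_subset_smul c
      (mem_weakSide_of_sameSign (Or.inl (hε ⟨W, hW⟩ (Finset.mem_attach _ _) hzW)))

/-- An extreme point `z` of a slice of the closed face spans the flat `⋂ {W ∈ H | z ∈ W}`:
otherwise `z` could be moved both ways inside that flat and the slice. -/
lemma mem_flatRays_of_mem_extremePoints {φ : V →L[ℝ] ℝ} {z : V}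
    (hz : z ∈ (closedFace H x₀ ∩ {z | φ z = 1}).extremePoints ℝ) : z ∈ flatRays H := by
  obtain ⟨⟨hzC, hz₁⟩, hzext⟩ := hz
  have hz₀ : z ≠ 0 := by rintro rfl; simp at hz₁
  classical
  set L : Submodule ℝ V := (H.filter (z ∈ ·)).inf id
  have hzL : z ∈ L := Submodule.mem_finsetInf.2 fun W hW => (Finset.mem_filter.1 hW).2
  refine ⟨L, ⟨_, Finset.filter_subset _ _, rfl⟩, ?_, hzL⟩
  by_contra hrk
  have hlt : 1 < finrank ℝ L := by
    have := Submodule.finrank_mono ((Submodule.span_singleton_le_iff_mem _ _).2 hzL)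
    rw [finrank_span_singleton hz₀] at this
    omega
  obtain ⟨y, hyL, hy₀, hφy⟩ := exists_mem_ne_zero_of_one_lt_finrank hlt φ.toLinearMap
  have hev := eventually_add_smul_mem_closedFace hHyp hzC fun W hW hzW =>
    Submodule.mem_finsetInf.1 hyL W (Finset.mem_filter.2 ⟨hW, hzW⟩)
  have hev₂ := hev.and ((continuous_neg.tendsto' (0 : ℝ) 0 neg_zero).eventually hev)
  obtain ⟨ε, ⟨hplus, hminus⟩, hε⟩ :=
    ((hev₂.filter_mono nhdsWithin_le_nhds).and self_mem_nhdsWithin).exists (f := 𝓝[≠] (0 : ℝ))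
  have hslice : ∀ t : ℝ, φ (z + t • y) = 1 := fun t => by
    simp [show φ y = 0 from hφy, show φ z = 1 from hz₁]
  have hmid : z ∈ openSegment ℝ (z + (-ε) • y) (z + ε • y) :=
    ⟨1 / 2, 1 / 2, by norm_num, by norm_num, by norm_num, by module⟩
  have h := hzext ⟨hminus, hslice _⟩ ⟨hplus, hslice _⟩ hmid
  exact smul_ne_zero hε hy₀ (by simpa using h)

/-- Krein–Milman on the compact slice `closedFace ∩ {φ = 1}`, whose extreme points lie on
one-dimensional flats. -/
theorem nonneg_on_closedFace_of_nonneg_on_flatRays (hEss : (⋂ W ∈ H, (W : Set V)) = {0})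
    {g : V →L[ℝ] ℝ} (hg : ∀ x ∈ closedFace H x₀ ∩ flatRays H, 0 ≤ g x) :
    ∀ x ∈ closedFace H x₀, 0 ≤ g x := by
  obtain ⟨φ, hφ⟩ := exists_pos_on_closedFace hHyp hEss x₀
  have hS : IsCompact (closedFace H x₀ ∩ {z | φ z = 1}) :=
    isCompact_inter_level_of_pos isClosed_closedFace
      (fun c hc z hz => smul_mem_closedFace hz hc.le) hφ
  have hSg : closedFace H x₀ ∩ {z | φ z = 1} ⊆ {z | 0 ≤ g z} := by
    rw [← closure_convexHull_extremePoints hS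
      (convex_closedFace.inter (convex_hyperplane φ.toLinearMap.isLinear 1))]
    exact closure_minimal (convexHull_min
        (fun z hz => hg z ⟨hz.1.1, mem_flatRays_of_mem_extremePoints hHyp hz⟩)
        (convex_halfSpace_ge g.toLinearMap.isLinear 0))
      (isClosed_le continuous_const g.continuous)
  intro x hx
  rcases eq_or_ne x 0 with rfl | hx₀
  · simp
  have hφx := hφ x hx hx₀
  have h := hSg ⟨smul_mem_closedFace hx (inv_nonneg.2 hφx.le), by simp [hφx.ne']⟩
  simp only [mem_ofPred_eq, map_smul, smul_eq_mul] at h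
  exact (mul_nonneg_iff_of_pos_left (inv_pos.2 hφx)).1 h

end ClosedFace

section DualArrangement

variable {V : Type*} [NormedAddCommGroup V] [NormedSpace ℝ V] {H : Finset (Submodule ℝ V)}

lemma finite_oneDimFlats : {l : Submodule ℝ V | IsFlat H l ∧ finrank ℝ l = 1}.Finite :=
  (H.powerset.finite_toSet.image fun J => J.inf id).subset
    fun _ ⟨⟨J, hJ, hl⟩, _⟩ => ⟨J, by simpa using hJ, hl.symm⟩

lemma dualSameFace_refl (f : V →L[ℝ] ℝ) : DualSameFace H f f := by
  intro l _ _ x _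
  rcases eq_or_ne (f x) 0 with h | h
  · exact Or.inr ⟨h, h⟩
  · exact Or.inl (mul_self_pos.2 h)

/-- The union of the faces of `H∨` above the face of `f`. -/
def dualStar (H : Finset (Submodule ℝ V)) (f : V →L[ℝ] ℝ) : Set (V →L[ℝ] ℝ) :=
  {g | ∀ x ∈ flatRays H, f x ≠ 0 → 0 < f x * g x}

lemma self_mem_dualStar (f : V →L[ℝ] ℝ) : f ∈ dualStar H f :=
  fun _ _ h => mul_self_pos.2 h

lemma isOpen_dualStar [FiniteDimensional ℝ V] (f : V →L[ℝ] ℝ) : IsOpen (dualStar H f) := by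
  have hstar : dualStar H f = ⋂ l ∈ {l : Submodule ℝ V | IsFlat H l ∧ finrank ℝ l = 1},
      {g | ∀ x ∈ l, f x ≠ 0 → 0 < f x * g x} := by
    ext g
    simp only [dualStar, flatRays, mem_iInter, mem_ofPred_eq]
    grind
  rw [hstar]
  refine finite_oneDimFlats.isOpen_biInter fun l ⟨_, hl⟩ => ?_
  by_cases h : ∃ v ∈ l, f v ≠ 0
  · obtain ⟨v, hv, hfv⟩ := h
    have hv₀ : v ≠ 0 := by rintro rfl; simp at hfv
    convert isOpen_lt continuous_const
      (continuous_const.mul (ContinuousLinearMap.apply ℝ ℝ v).continuous) using 1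
    ext g
    refine ⟨fun hg => hg v hv hfv, fun hg x hx hfx => ?_⟩
    obtain ⟨c, rfl⟩ := exists_smul_eq_of_finrank_eq_one hl hv hv₀ hx
    have hc : c ≠ 0 := by rintro rfl; simp at hfx
    have hfgv : 0 < f v * g v := hg
    simp only [map_smul, smul_eq_mul]
    nlinarith [mul_pos (mul_self_pos.2 hc) hfgv]
  · push Not at h
    convert isOpen_univ
    exact eq_univ_of_forall fun g x hx hfx => (hfx (h x hx)).elim

lemma dualFace_eq_dualStar {f : V →L[ℝ] ℝ} (hf : ∀ x ∈ flatRays H, x ≠ 0 → f x ≠ 0) :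
    {g | DualSameFace H f g} = dualStar H f := by
  ext g
  refine ⟨fun hg x ⟨l, hl, hrk, hx⟩ hfx => (hg l hl hrk x hx).resolve_right fun h => hfx h.1,
    fun hg l hl hrk x hx => ?_⟩
  rcases eq_or_ne x 0 with rfl | hx₀
  · simp
  · exact Or.inl (hg x ⟨l, hl, hrk, hx⟩ (hf x ⟨l, hl, hrk, hx⟩ hx₀))

lemma isDualChamber_of_ne_zero [FiniteDimensional ℝ V] {f : V →L[ℝ] ℝ}
    (hf : ∀ x ∈ flatRays H, x ≠ 0 → f x ≠ 0) : IsDualChamber H {g | DualSameFace H f g} :=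
  ⟨⟨f, rfl⟩, dualFace_eq_dualStar hf ▸ isOpen_dualStar f⟩

lemma dualFace_subset_closure_dualFace {f₀ f : V →L[ℝ] ℝ} (hf : f ∈ dualStar H f₀) :
    {g | DualSameFace H f₀ g} ⊆ closure {g | DualSameFace H f g} := by
  intro a ha
  have hface : ∀ s : ℝ, 0 < s → DualSameFace H f (a + s • f) := by
    intro s hs l hl hrk x hx
    simp only [add_apply, smul_apply, smul_eq_mul]
    rcases ha l hl hrk x hx with hpos | ⟨-, hax⟩
    · have hfx := hf x ⟨l, hl, hrk, hx⟩ fun h => by simp [h] at hpos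
      exact Or.inl (by nlinarith [mul_pos_of_mul_pos_of_mul_pos hfx hpos, mul_self_nonneg (f x)])
    · rcases eq_or_ne (f x) 0 with h | h
      · exact Or.inr ⟨h, by simp [h, hax]⟩
      · exact Or.inl (by rw [hax, zero_add]; nlinarith [mul_pos hs (mul_self_pos.2 h)])
  have hlim : Tendsto (fun s : ℝ => a + s • f) (𝓝[>] 0) (𝓝 a) :=
    ((by fun_prop : Continuous fun s : ℝ => a + s • f).tendsto' 0 a (by simp)).mono_left
      nhdsWithin_le_nhds
  exact mem_closure_of_tendsto hlim (eventually_nhdsWithin_of_forall hface)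

lemma dualFace_subset_dualStar_of_mem_closure {g₀ f₀ : V →L[ℝ] ℝ}
    (hf₀ : f₀ ∈ closure {g | DualSameFace H g₀ g}) : {g | DualSameFace H g₀ g} ⊆ dualStar H f₀ := by
  intro g hg x ⟨l, hl, hrk, hx⟩ hf₀x
  obtain ⟨hnonneg, hzero⟩ : f₀ ∈ weakSide (ContinuousLinearMap.apply ℝ ℝ x).toLinearMap g₀ :=
    closure_minimal
      (fun _ (hh : DualSameFace H g₀ _) => mem_weakSide_of_sameSign (hh l hl hrk x hx))
      (isClosed_weakSide (ContinuousLinearMap.apply ℝ ℝ x).continuous) hf₀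
  have hg₀x : g₀ x ≠ 0 := fun h => hf₀x (hzero h)
  exact mul_pos_of_mul_pos_of_mul_pos (hnonneg.lt_of_ne' (mul_ne_zero hg₀x hf₀x))
    ((hg l hl hrk x hx).resolve_right fun h => hg₀x h.1)

lemma exists_ne_zero_on_flatRays [FiniteDimensional ℝ V] :
    ∃ h : V →L[ℝ] ℝ, ∀ x ∈ flatRays H, x ≠ 0 → h x ≠ 0 := by
  have : Finite {l : Submodule ℝ V | IsFlat H l ∧ finrank ℝ l = 1} :=
    finite_oneDimFlats.to_subtype
  have hgen : ∀ l : {l : Submodule ℝ V | IsFlat H l ∧ finrank ℝ l = 1}, ∃ v ∈ l.1, v ≠ 0 := by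
    rintro ⟨l, -, hl⟩
    refine Submodule.exists_mem_ne_zero_of_ne_bot fun (h : l = ⊥) => ?_
    rw [h, finrank_bot] at hl
    omega
  choose v hvl hv₀ using hgen
  obtain ⟨h, hh⟩ := Module.Dual.exists_forall_ne_zero_of_forall_exists
    (fun l => (ContinuousLinearMap.apply ℝ ℝ (v l)).toLinearMap) fun l => by
      obtain ⟨g, -, hg⟩ := exists_dual_vector ℝ (v l) (norm_ne_zero_iff.2 (hv₀ l))
      exact ⟨g, by simpa [hg] using hv₀ l⟩
  refine ⟨h, fun x ⟨l, hl, hrk, hx⟩ hx₀ => ?_⟩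
  obtain ⟨c, rfl⟩ := exists_smul_eq_of_finrank_eq_one hrk (hvl ⟨l, hl, hrk⟩) (hv₀ _) hx
  have hc : c ≠ 0 := by rintro rfl; simp at hx₀
  simpa [hc] using hh ⟨l, hl, hrk⟩

/-- The chamber of `f₀ + ε h` for a generic `h` with `h x < 0` and small `ε > 0`. -/
lemma exists_dualChamber_neg [FiniteDimensional ℝ V] (f₀ : V →L[ℝ] ℝ) {x : V}
    (hx : x ∈ flatRays H) (hx₀ : x ≠ 0) (hf₀x : f₀ x ≤ 0) :
    ∃ B, IsDualChamber H B ∧ {g | DualSameFace H f₀ g} ⊆ closure B ∧ ∃ g ∈ B, g x < 0 := by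
  obtain ⟨h, hh, hhx⟩ : ∃ h : V →L[ℝ] ℝ, (∀ y ∈ flatRays H, y ≠ 0 → h y ≠ 0) ∧ h x < 0 := by
    obtain ⟨h, hh⟩ := exists_ne_zero_on_flatRays (H := H)
    rcases (hh x hx hx₀).lt_or_gt with hlt | hgt
    · exact ⟨h, hh, hlt⟩
    · exact ⟨-h, fun y hy hy₀ => by simpa using hh y hy hy₀, by simpa using hgt⟩
  have hev : ∀ᶠ ε in 𝓝 (0 : ℝ), f₀ + ε • h ∈ dualStar H f₀ :=
    ((by fun_prop : Continuous fun ε : ℝ => f₀ + ε • h).tendsto' 0 f₀ (by simp)).eventually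
      ((isOpen_dualStar f₀).mem_nhds (self_mem_dualStar f₀))
  obtain ⟨ε, hstar, hε⟩ :=
    ((hev.filter_mono nhdsWithin_le_nhds).and self_mem_nhdsWithin).exists (f := 𝓝[>] (0 : ℝ))
  have hε : 0 < ε := hε
  have hne : ∀ y ∈ flatRays H, y ≠ 0 → (f₀ + ε • h) y ≠ 0 := by
    intro y hy hy₀
    by_cases hf₀y : f₀ y = 0
    · simpa [hf₀y, hε.ne'] using hh y hy hy₀
    · exact right_ne_zero_of_mul (hstar y hy hf₀y).ne'
  refine ⟨_, isDualChamber_of_ne_zero hne, dualFace_subset_closure_dualFace hstar,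
    f₀ + ε • h, dualSameFace_refl _, ?_⟩
  simp only [add_apply, smul_apply, smul_eq_mul]
  nlinarith

lemma apply_eq_zero_of_mem_span_dualFace {f₀ : V →L[ℝ] ℝ} {x : V} (hx : x ∈ flatRays H)
    (h₀ : f₀ x = 0) {s : V →L[ℝ] ℝ} (hs : s ∈ Submodule.span ℝ {g | DualSameFace H f₀ g}) :
    s x = 0 := by
  obtain ⟨l, hl, hrk, hxl⟩ := hx
  have hspan : Submodule.span ℝ {g | DualSameFace H f₀ g} ≤
      LinearMap.ker (ContinuousLinearMap.apply ℝ ℝ x).toLinearMap :=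
    Submodule.span_le.2 fun g hg => ((hg l hl hrk x hxl).resolve_left (by simp [h₀])).2
  exact hspan hs

end DualArrangement

section Quotient

variable {E : Type*} [AddCommGroup E] [Module ℝ E] {P : Submodule ℝ E} {C : Set E}
  (hC : ∀ g ∈ C, ∀ s ∈ P, g + s ∈ C)
include hC

lemma mkQ_mem_image_iff {g : E} : P.mkQ g ∈ P.mkQ '' C ↔ g ∈ C := by
  refine ⟨fun ⟨g', hg', he⟩ => ?_, fun h => ⟨g, h, rfl⟩⟩
  simpa using hC g' hg' _ ((Submodule.Quotient.eq P).1 he.symm)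

lemma preimage_mkQ_image : P.mkQ ⁻¹' (P.mkQ '' C) = C :=
  ext fun _ => mkQ_mem_image_iff hC

lemma image_mkQ_eq_univ_iff : P.mkQ '' C = univ ↔ C = univ := by
  refine ⟨fun h => ?_, fun h => h ▸ image_univ_of_surjective P.mkQ_surjective⟩
  rw [← preimage_mkQ_image hC, h, preimage_univ]

lemma isClosed_image_mkQ [TopologicalSpace E] (hCc : IsClosed C) : IsClosed (P.mkQ '' C) :=
  (Submodule.isQuotientMap_mkQ P).isClosed_preimage.1 (by rwa [preimage_mkQ_image hC])

end Quotient

section Cone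

variable {V : Type*} [NormedAddCommGroup V] [NormedSpace ℝ V] {H : Finset (Submodule ℝ V)}
  (f₀ : V →L[ℝ] ℝ) (x₀ : V)

/-- The preimage under `π` of the cone `K` of the theorem. -/
def coneK (H : Finset (Submodule ℝ V)) (f₀ : V →L[ℝ] ℝ) (x₀ : V) : Set (V →L[ℝ] ℝ) :=
  {g | ∀ x ∈ closedFace H x₀ ∩ flatRays H, 0 ≤ f₀ x ∧ (f₀ x = 0 → 0 ≤ g x)}

lemma isClosed_coneK : IsClosed (coneK H f₀ x₀) := by
  simp only [coneK, ofPred_forall]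
  exact isClosed_biInter fun x _ => isClosed_const.inter (isClosed_imp isOpen_const
    (isClosed_le continuous_const (ContinuousLinearMap.apply ℝ ℝ x).continuous))

lemma convex_coneK : Convex ℝ (coneK H f₀ x₀) := by
  intro g hg g' hg' a b ha hb _ x hx
  refine ⟨(hg x hx).1, fun h₀ => ?_⟩
  simp only [add_apply, smul_apply, smul_eq_mul]
  exact add_nonneg (mul_nonneg ha ((hg x hx).2 h₀)) (mul_nonneg hb ((hg' x hx).2 h₀))

variable {f₀ x₀}

lemma smul_mem_coneK {g : V →L[ℝ] ℝ} (hg : g ∈ coneK H f₀ x₀) {c : ℝ} (hc : 0 ≤ c) :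
    c • g ∈ coneK H f₀ x₀ :=
  fun x hx => ⟨(hg x hx).1, fun h₀ => mul_nonneg hc ((hg x hx).2 h₀)⟩

lemma add_mem_coneK {g s : V →L[ℝ] ℝ} (hg : g ∈ coneK H f₀ x₀)
    (hs : s ∈ Submodule.span ℝ {g | DualSameFace H f₀ g}) : g + s ∈ coneK H f₀ x₀ :=
  fun x hx => ⟨(hg x hx).1, fun h₀ => by
    simpa [apply_eq_zero_of_mem_span_dualFace hx.2 h₀ hs] using (hg x hx).2 h₀⟩

variable [FiniteDimensional ℝ V] (hHyp : ∀ W ∈ H, ∃ f : V →ₗ[ℝ] ℝ, LinearMap.ker f = W)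
  (hEss : (⋂ W ∈ H, (W : Set V)) = {0})
include hHyp hEss

lemma nonneg_on_face_iff_mem_coneK {g₀ g : V →L[ℝ] ℝ}
    (hf₀ : f₀ ∈ closure {g | DualSameFace H g₀ g}) (hg : DualSameFace H g₀ g) :
    (∀ y, SameFace H x₀ y → 0 ≤ g y) ↔ g ∈ coneK H f₀ x₀ := by
  have hstar := dualFace_subset_dualStar_of_mem_closure hf₀ hg
  constructor
  · intro hface x hx
    have hgx := nonneg_on_closedFace_of_nonneg_on_face hface x hx.1
    refine ⟨le_of_not_gt fun hneg => ?_, fun _ => hgx⟩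
    nlinarith [hstar x hx.2 hneg.ne]
  · intro hK y hy
    refine nonneg_on_closedFace_of_nonneg_on_flatRays hHyp hEss (fun x hx => ?_) y
      (mem_closedFace_of_sameFace hy)
    obtain ⟨hnonneg, hzero⟩ := hK x hx
    rcases hnonneg.eq_or_lt with h₀ | hpos
    · exact hzero h₀.symm
    · exact (pos_of_mul_pos_right (hstar x hx.2 hpos.ne') hpos.le).le

lemma face_subset_bigCone_iff {B' : Set (V →L[ℝ] ℝ)} (hB' : IsDualFace H B')
    (hAB' : {g | DualSameFace H f₀ g} ⊆ closure B') :
    {y | SameFace H x₀ y} ⊆ bigCone B' ↔ B' ⊆ coneK H f₀ x₀ := by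
  obtain ⟨g₀, rfl⟩ := hB'
  have hf₀ := hAB' (dualSameFace_refl f₀)
  refine ⟨fun hB g hg => ?_, fun hK y hy g hg => ?_⟩
  · exact (nonneg_on_face_iff_mem_coneK hHyp hEss hf₀ hg).1 fun y hy => hB hy g hg
  · exact (nonneg_on_face_iff_mem_coneK hHyp hEss hf₀ hg).2 (hK hg) y hy

lemma coneK_eq_univ_iff :
    coneK H f₀ x₀ = univ ↔ {y | SameFace H x₀ y} ⊆ smallCone H {g | DualSameFace H f₀ g} := by
  refine ⟨fun hK y hy => mem_iInter₂.2 fun B' ⟨hB', hAB'⟩ =>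
    (face_subset_bigCone_iff hHyp hEss hB'.1 hAB').2 (hK ▸ subset_univ _) hy, fun hsmall => ?_⟩
  have hpos : ∀ x ∈ closedFace H x₀ ∩ flatRays H, x ≠ 0 → 0 < f₀ x := by
    intro x hx hx₀
    by_contra! hf₀x
    obtain ⟨B', hB', hAB', g, hg, hgx⟩ := exists_dualChamber_neg f₀ hx.2 hx₀ hf₀x
    have hB : ∀ y, SameFace H x₀ y → 0 ≤ g y :=
      fun y hy => mem_iInter₂.1 (hsmall hy) B' ⟨hB', hAB'⟩ g hg
    linarith [nonneg_on_closedFace_of_nonneg_on_face hB x hx.1]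
  refine eq_univ_of_forall fun g x hx => ?_
  rcases eq_or_ne x 0 with rfl | hx₀
  · simp
  · exact ⟨(hpos x hx hx₀).le, fun h => absurd h (hpos x hx hx₀).ne'⟩

end Cone

end HyperplaneArrangement

open HyperplaneArrangement

/-- For a dual face `A∨` and a face `B` of `H`, there is a closed
convex cone `K` in the quotient `V*⧸span(A∨)` such that, for every dual face `B∨`
with `A∨ ≤ B∨`, one has `B ⊆ U(B∨)` iff `π(B∨) ⊆ K`; and `K` is the whole quotient
iff `B ⊆ V(A∨)`. -/
theorem statement5 {V : Type*} [NormedAddCommGroup V] [NormedSpace ℝ V]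
    [FiniteDimensional ℝ V] (H : Finset (Submodule ℝ V))
    (hHyp : ∀ W ∈ H, ∃ f : V →ₗ[ℝ] ℝ, f ≠ 0 ∧ LinearMap.ker f = W)
    (hEss : (⋂ W ∈ H, (W : Set V)) = {0})
    (A : Set (V →L[ℝ] ℝ)) (hA : IsDualFace H A)
    (B : Set V) (hB : IsFace H B) :
    ∃ K : Set ((V →L[ℝ] ℝ) ⧸ Submodule.span ℝ A),
      IsClosed K ∧ Convex ℝ K ∧
      (∀ c : ℝ, 0 < c → ∀ x ∈ K, c • x ∈ K) ∧
      (∀ B' : Set (V →L[ℝ] ℝ), IsDualFace H B' → A ⊆ closure B' →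
        (B ⊆ bigCone B' ↔ (Submodule.span ℝ A).mkQ '' B' ⊆ K)) ∧
      (K = Set.univ ↔ B ⊆ smallCone H A) := by
  obtain ⟨f₀, rfl⟩ := hA
  obtain ⟨x₀, rfl⟩ := hB
  have hKer : ∀ W ∈ H, ∃ f : V →ₗ[ℝ] ℝ, LinearMap.ker f = W :=
    fun W hW => (hHyp W hW).imp fun _ => And.right
  have hsat : ∀ g ∈ coneK H f₀ x₀, ∀ s ∈ Submodule.span ℝ {g | DualSameFace H f₀ g},
      g + s ∈ coneK H f₀ x₀ :=
    fun _ hg _ hs => add_mem_coneK hg hs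
  refine ⟨(Submodule.span ℝ _).mkQ '' coneK H f₀ x₀, isClosed_image_mkQ hsat (isClosed_coneK f₀ x₀),
    (convex_coneK f₀ x₀).linear_image _, ?_, fun B' hB' hAB' => ?_, ?_⟩
  · rintro c hc _ ⟨g, hg, rfl⟩
    exact ⟨c • g, smul_mem_coneK hg hc.le, map_smul _ _ _⟩
  · rw [face_subset_bigCone_iff hKer hEss hB' hAB', image_subset_iff, preimage_mkQ_image hsat]
  · rw [image_mkQ_eq_univ_iff hsat, coneK_eq_univ_iff hKer hEss]
end

section
/- (Sign constancy on dual faces.) Let B be a face of H and let f, g ∈ V* lie in the same face of the dual arrangement H∨. Then f(x) ≥ 0 for all x ∈ B if and only if g(x) ≥ 0 for all x ∈ B. Consequently, for each face B of H, the dual cone {f ∈ V* : f(x) ≥ 0 for all x ∈ B} is a union of faces of H∨. -/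
/-! A linear functional is nonnegative on a face `B` iff it is nonnegative on its closure, the
closed face, a polyhedral cone that is pointed because the arrangement is essential. If `g` were
negative somewhere on the closed face, take such a point `y` whose active flat (the intersection
of the hyperplanes through `y`) has minimal dimension. If that dimension were at least two, one
could move `y` inside its active flat along the kernel of `g` until a new hyperplane is met
(pointedness guarantees this in one of the two directions), keeping `g` constant and lowering
the dimension. So the active flat is a one-dimensional flat of `H`, on which `g` has the sign
of `f`, and `f` is nonnegative on the closed face. -/

open Module Set

theorem LinearMap.exists_ne_zero_eq_smul_of_ker_eq {K V : Type*} [Field K] [AddCommGroup V]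
    [Module K V] {φ ψ : V →ₗ[K] K} (h : ker φ = ker ψ) : ∃ c : K, c ≠ 0 ∧ φ = c • ψ := by
  obtain ⟨c, rfl⟩ : ∃ c : K, c • ψ = φ := by
    simpa [Submodule.mem_span_singleton] using
      mem_span_of_iInf_ker_le_ker (ι := Unit) (L := fun _ => ψ) (K := φ) (by simp [h])
  rcases eq_or_ne c 0 with rfl | hc
  · have hψ : ψ = 0 := ker_eq_top.1 (by simpa using h.symm)
    exact ⟨1, one_ne_zero, by simp [hψ]⟩
  · exact ⟨c, hc, rfl⟩

theorem Submodule.exists_mem_ne_zero_of_one_lt_finrank {K V : Type*} [Field K] [AddCommGroup V]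
    [Module K V] {p : Submodule K V} [FiniteDimensional K p] (hp : 1 < finrank K p)
    (g : V →ₗ[K] K) : ∃ w ∈ p, w ≠ 0 ∧ g w = 0 := by
  obtain ⟨⟨w, hwp⟩, hw, hw0⟩ := exists_mem_ne_zero_of_ne_bot
    (LinearMap.ker_ne_bot_of_finrank_lt (f := g.domRestrict p) (by rwa [finrank_self]))
  exact ⟨w, hwp, by simpa using hw0, hw⟩

namespace Arrangement

variable {V ι : Type*} [AddCommGroup V] [Module ℝ V] (φ : ι → V →ₗ[ℝ] ℝ) (x₀ : V)

def face : Set V := {y | ∀ i, 0 < φ i x₀ * φ i y ∨ (φ i x₀ = 0 ∧ φ i y = 0)}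

def closedFace : Set V := {y | ∀ i, 0 ≤ φ i x₀ * φ i y ∧ (φ i x₀ = 0 → φ i y = 0)}

def activeFlat (y : V) : Submodule ℝ V := ⨅ (i) (_ : φ i y = 0), LinearMap.ker (φ i)

variable {φ x₀}

theorem self_mem_face : x₀ ∈ face φ x₀ := fun i => by
  rcases eq_or_ne (φ i x₀) 0 with h | h
  · exact Or.inr ⟨h, h⟩
  · exact Or.inl (mul_self_pos.2 h)

theorem face_subset_closedFace : face φ x₀ ⊆ closedFace φ x₀ := fun y hy i => by
  rcases hy i with h | ⟨h₁, h₂⟩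
  · exact ⟨h.le, fun h₀ => by simp [h₀] at h⟩
  · exact ⟨by simp [h₁], fun _ => h₂⟩

theorem smul_add_smul_mem_face {y : V} (hy : y ∈ closedFace φ x₀) {s : ℝ} (hs₀ : 0 < s)
    (hs₁ : s ≤ 1) : s • x₀ + (1 - s) • y ∈ face φ x₀ := fun i => by
  rcases eq_or_ne (φ i x₀) 0 with h | h
  · exact Or.inr ⟨h, by simp [h, (hy i).2 h]⟩
  · left
    have : φ i x₀ * φ i (s • x₀ + (1 - s) • y) =
        s * (φ i x₀ * φ i x₀) + (1 - s) * (φ i x₀ * φ i y) := by simp; ring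
    rw [this]
    nlinarith [mul_self_pos.2 h, (hy i).1]

theorem nonneg_on_closedFace_of_nonneg_on_face (f : V →ₗ[ℝ] ℝ)
    (hf : ∀ y ∈ face φ x₀, 0 ≤ f y) : ∀ y ∈ closedFace φ x₀, 0 ≤ f y := by
  intro y hy
  by_contra! hfy
  have hfx₀ := hf x₀ self_mem_face
  -- the weight `s` makes `f (s • x₀ + (1 - s) • y) = f y / 2`
  set s := -f y / (2 * (f x₀ - f y))
  have hs₀ : 0 < s := div_pos (by linarith) (by linarith)
  have hs₁ : s ≤ 1 := by
    rw [div_le_one (by linarith)]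
    linarith
  have hfs : s * (f x₀ - f y) = -f y / 2 := by
    have : f x₀ - f y ≠ 0 := by linarith
    simp only [s]
    field_simp
  have := hf _ (smul_add_smul_mem_face hy hs₀ hs₁)
  simp only [map_add, map_smul, smul_eq_mul] at this
  linarith

theorem mem_activeFlat {y v : V} : v ∈ activeFlat φ y ↔ ∀ i, φ i y = 0 → φ i v = 0 := by
  simp [activeFlat, Submodule.mem_iInf]

theorem mem_activeFlat_self (y : V) : y ∈ activeFlat φ y := mem_activeFlat.2 fun _ h => h

theorem exists_add_smul_mem_closedFace_activeFlat_lt [Finite ι] {y u : V}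
    (hy : y ∈ closedFace φ x₀) (hu : u ∈ activeFlat φ y) {j : ι}
    (hj : φ j x₀ * φ j u < 0) :
    ∃ t : ℝ, y + t • u ∈ closedFace φ x₀ ∧ activeFlat φ (y + t • u) < activeFlat φ y := by
  classical
  have := Fintype.ofFinite ι
  rw [mem_activeFlat] at hu
  obtain ⟨i₀, hi₀, hmin⟩ := (Finset.univ.filter fun i => φ i x₀ * φ i u < 0).exists_min_image
    (fun i => φ i x₀ * φ i y / -(φ i x₀ * φ i u)) ⟨j, by simpa using hj⟩
  simp only [Finset.mem_filter, Finset.mem_univ, true_and] at hi₀ hmin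
  -- `t` is the first time the ray `y + t • u` meets a hyperplane not containing `y`
  set t := φ i₀ x₀ * φ i₀ y / -(φ i₀ x₀ * φ i₀ u)
  have ht : 0 ≤ t := div_nonneg (hy i₀).1 (by linarith)
  have hval : ∀ i, φ i (y + t • u) = φ i y + t * φ i u := by simp
  have hi₀y : φ i₀ y ≠ 0 := fun h => by simp [hu i₀ h] at hi₀
  have hi₀z : φ i₀ (y + t • u) = 0 := by
    have hx₀ : φ i₀ x₀ ≠ 0 := fun h => by simp [h] at hi₀
    have hu₀ : φ i₀ u ≠ 0 := fun h => by simp [h] at hi₀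
    have : φ i₀ x₀ * φ i₀ (y + t • u) = 0 := by
      rw [hval]
      simp only [t]
      field_simp
      ring
    simpa [hx₀] using this
  refine ⟨t, fun i => ⟨?_, fun h => by rw [hval, (hy i).2 h, hu i ((hy i).2 h)]; ring⟩,
    SetLike.lt_iff_le_and_exists.2 ⟨fun v hv => ?_, y, mem_activeFlat_self y, ?_⟩⟩
  · rw [hval, mul_add]
    rcases lt_or_ge (φ i x₀ * φ i u) 0 with hneg | hnonneg
    · have := (le_div_iff₀ (neg_pos.2 hneg)).1 (hmin i hneg)
      nlinarith
    · nlinarith [(hy i).1]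
  · rw [mem_activeFlat] at hv ⊢
    exact fun i h => hv i (by rw [hval, h, hu i h]; ring)
  · exact fun h => hi₀y (mem_activeFlat.1 h i₀ hi₀z)

variable [FiniteDimensional ℝ V] [Finite ι]

theorem exists_mem_closedFace_finrank_activeFlat_lt (hφ : ∀ v, (∀ i, φ i v = 0) → v = 0)
    (g : V →ₗ[ℝ] ℝ) {y : V} (hy : y ∈ closedFace φ x₀)
    (hrank : 1 < finrank ℝ (activeFlat φ y)) :
    ∃ z ∈ closedFace φ x₀, g z = g y ∧
      finrank ℝ (activeFlat φ z) < finrank ℝ (activeFlat φ y) := by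
  obtain ⟨w, hwA, hw0, hgw⟩ := Submodule.exists_mem_ne_zero_of_one_lt_finrank hrank g
  obtain ⟨j, hj⟩ : ∃ j, φ j w ≠ 0 := by
    by_contra! h
    exact hw0 (hφ w h)
  have hx₀j : φ j x₀ ≠ 0 := fun h => hj (mem_activeFlat.1 hwA j ((hy j).2 h))
  obtain ⟨u, huA, hgu, hju⟩ : ∃ u ∈ activeFlat φ y, g u = 0 ∧ φ j x₀ * φ j u < 0 := by
    rcases (mul_ne_zero hx₀j hj).lt_or_gt with h | h
    · exact ⟨w, hwA, hgw, h⟩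
    · exact ⟨-w, neg_mem hwA, by simp [hgw], by simpa using h⟩
  obtain ⟨t, hz, hlt⟩ := exists_add_smul_mem_closedFace_activeFlat_lt hy huA hju
  exact ⟨y + t • u, hz, by simp [hgu], Submodule.finrank_lt_finrank_of_lt hlt⟩

theorem nonneg_on_closedFace_of_nonneg_on_rays (hφ : ∀ v, (∀ i, φ i v = 0) → v = 0)
    (g : V →ₗ[ℝ] ℝ)
    (hg : ∀ y ∈ closedFace φ x₀, finrank ℝ (activeFlat φ y) = 1 → 0 ≤ g y) :
    ∀ y ∈ closedFace φ x₀, 0 ≤ g y := by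
  suffices ∀ n, ∀ y ∈ closedFace φ x₀, finrank ℝ (activeFlat φ y) = n → 0 ≤ g y from
    fun y hy => this _ y hy rfl
  intro n
  induction n using Nat.strong_induction_on with
  | _ n ih =>
    intro y hy hn
    by_contra! hgy
    obtain hn0 | rfl | hn2 : n = 0 ∨ n = 1 ∨ 1 < n := by omega
    · have hA : activeFlat φ y = ⊥ := Submodule.finrank_eq_zero.1 (hn.trans hn0)
      have : y = 0 := by simpa [hA] using mem_activeFlat_self (φ := φ) y
      simp [this] at hgy
    · exact hgy.not_ge (hg y hy hn)
    · obtain ⟨z, hz, hgz, hlt⟩ :=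
        exists_mem_closedFace_finrank_activeFlat_lt hφ g hy (hn ▸ hn2)
      exact hgy.not_ge (hgz ▸ ih _ (hn ▸ hlt) z hz rfl)

end Arrangement

open Arrangement

section SignConstancy

variable {V : Type*} [NormedAddCommGroup V] [NormedSpace ℝ V] {H : Finset (Submodule ℝ V)}
  {F : Submodule ℝ V → V →ₗ[ℝ] ℝ}

theorem setOf_sameFace_eq_face (hF : ∀ W ∈ H, LinearMap.ker (F W) = W) (x₀ : V) :
    {y | SameFace H x₀ y} = face (fun W : H => F W) x₀ := by
  ext y
  refine ⟨fun hy W => hy W W.2 (F W) (hF W W.2), fun hy W hW ψ hψ => ?_⟩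
  obtain ⟨c, hc, rfl⟩ := LinearMap.exists_ne_zero_eq_smul_of_ker_eq (hψ.trans (hF W hW).symm)
  have hc2 : 0 < c * c := mul_self_pos.2 hc
  rcases hy ⟨W, hW⟩ with h | ⟨h₁, h₂⟩
  · left
    simp only [LinearMap.smul_apply, smul_eq_mul]
    nlinarith
  · right
    simp [h₁, h₂]

theorem isFlat_activeFlat (hF : ∀ W ∈ H, LinearMap.ker (F W) = W) (y : V) :
    IsFlat H (activeFlat (fun W : H => F W) y) := by
  classical
  refine ⟨H.filter fun W => F W y = 0, Finset.filter_subset _ _, ?_⟩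
  ext v
  simp only [mem_activeFlat, Submodule.mem_finsetInf, Finset.mem_filter, id, Subtype.forall,
    and_imp]
  exact forall₂_congr fun W hW => imp_congr_right fun _ => by rw [← LinearMap.mem_ker, hF W hW]

theorem DualSameFace.symm {f g : V →L[ℝ] ℝ} (h : DualSameFace H f g) : DualSameFace H g f :=
  fun l hl hl1 x hx => by
    rcases h l hl hl1 x hx with h | ⟨h₁, h₂⟩
    · exact Or.inl (by rwa [mul_comm])
    · exact Or.inr ⟨h₂, h₁⟩

theorem DualSameFace.refl (f : V →L[ℝ] ℝ) : DualSameFace H f f := fun _ _ _ x _ => by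
  rcases eq_or_ne (f x) 0 with h | h
  · exact Or.inr ⟨h, h⟩
  · exact Or.inl (mul_self_pos.2 h)

variable [FiniteDimensional ℝ V]

theorem DualSameFace.nonneg_on_face (hHyp : ∀ W ∈ H, ∃ φ : V →ₗ[ℝ] ℝ, LinearMap.ker φ = W)
    (hEss : (⋂ W ∈ H, (W : Set V)) = {0}) {B : Set V} (hB : IsFace H B)
    {f g : V →L[ℝ] ℝ} (hfg : DualSameFace H f g) (hf : ∀ x ∈ B, 0 ≤ f x) :
    ∀ x ∈ B, 0 ≤ g x := by
  obtain ⟨x₀, rfl⟩ := hB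
  choose! F hF using hHyp
  rw [setOf_sameFace_eq_face hF] at hf ⊢
  have hφ : ∀ v, (∀ W : H, F W v = 0) → v = 0 := fun v hv => by
    have : v ∈ ⋂ W ∈ H, (W : Set V) :=
      mem_iInter₂.2 fun W hW => by rw [SetLike.mem_coe, ← hF W hW]; exact hv ⟨W, hW⟩
    simpa [hEss] using this
  have hfC := nonneg_on_closedFace_of_nonneg_on_face (f : V →ₗ[ℝ] ℝ) hf
  refine fun x hx => nonneg_on_closedFace_of_nonneg_on_rays hφ (g : V →ₗ[ℝ] ℝ)
    (fun y hy hy1 => ?_) x (face_subset_closedFace hx)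
  rcases hfg _ (isFlat_activeFlat hF y) hy1 y (mem_activeFlat_self y) with h | ⟨_, h⟩
  · have := hfC y hy
    simp only [ContinuousLinearMap.coe_coe] at this ⊢
    exact (pos_of_mul_pos_right h this).le
  · simp [h]

end SignConstancy

/-- sign constancy on dual faces: if `f`, `g` lie in the same face
of the dual arrangement and `B` is a face of `H`, then `f ≥ 0` on `B` iff
`g ≥ 0` on `B`; consequently the dual cone of `B` is a union of dual faces. -/
theorem statement10 {V : Type*} [NormedAddCommGroup V] [NormedSpace ℝ V]
    [FiniteDimensional ℝ V] (H : Finset (Submodule ℝ V))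
    (hHyp : ∀ W ∈ H, ∃ f : V →ₗ[ℝ] ℝ, f ≠ 0 ∧ LinearMap.ker f = W)
    (hEss : (⋂ W ∈ H, (W : Set V)) = {0})
    (B : Set V) (hB : IsFace H B)
    (f g : V →L[ℝ] ℝ) (hfg : DualSameFace H f g) :
    ((∀ x ∈ B, 0 ≤ f x) ↔ (∀ x ∈ B, 0 ≤ g x)) ∧
    {φ : V →L[ℝ] ℝ | ∀ x ∈ B, 0 ≤ φ x} =
      ⋃₀ {A : Set (V →L[ℝ] ℝ) |
        IsDualFace H A ∧ A ⊆ {φ : V →L[ℝ] ℝ | ∀ x ∈ B, 0 ≤ φ x}} := by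
  have hker : ∀ W ∈ H, ∃ φ : V →ₗ[ℝ] ℝ, LinearMap.ker φ = W :=
    fun W hW => (hHyp W hW).imp fun _ => And.right
  refine ⟨⟨hfg.nonneg_on_face hker hEss hB, hfg.symm.nonneg_on_face hker hEss hB⟩, ?_⟩
  ext φ
  refine ⟨fun hφ => ⟨{ψ | DualSameFace H φ ψ}, ⟨⟨φ, rfl⟩, fun ψ hψ => ?_⟩, DualSameFace.refl φ⟩,
    fun ⟨A, ⟨_, hA⟩, hφA⟩ => hA hφA⟩
  exact hψ.nonneg_on_face hker hEss hB hφ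
end

section
/- For every face A∨ of the dual arrangement H∨, the small dual cone V(A∨) is a closed convex cone in V that contains no line: V(A∨) ∩ (−V(A∨)) = {0} (strict convexity). -/
open Filter Topology

lemma gen_of_finrank_one {V : Type*} [AddCommGroup V] [Module ℝ V]
    (l : Submodule ℝ V) (hl : Module.finrank ℝ l = 1) :
    ∃ v : V, v ∈ l ∧ v ≠ 0 ∧ ∀ x ∈ l, ∃ c : ℝ, x = c • v := by
  obtain ⟨v, hv0, hgen⟩ := finrank_eq_one_iff'.mp hl
  refine ⟨(v : V), v.2, fun h => hv0 (Subtype.ext h), ?_⟩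
  intro x hx
  obtain ⟨c, hc⟩ := hgen ⟨x, hx⟩
  exact ⟨c, by simpa using (congrArg Subtype.val hc).symm⟩

/-- There is a continuous linear functional nonvanishing on each of finitely many
nonzero vectors. -/
lemma exists_functional_ne {V : Type*} [NormedAddCommGroup V] [NormedSpace ℝ V]
    (S : Finset V) (hS : ∀ w ∈ S, w ≠ 0) :
    ∃ h : V →L[ℝ] ℝ, ∀ w ∈ S, h w ≠ 0 := by
  classical
  induction S using Finset.induction_on with
  | empty => exact ⟨0, by simp⟩
  | @insert w S hwS ih =>
    obtain ⟨h, hh⟩ := ih (fun x hx => hS x (Finset.mem_insert_of_mem hx))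
    by_cases hw : h w ≠ 0
    · refine ⟨h, fun x hx => ?_⟩
      rcases Finset.mem_insert.mp hx with rfl | hx
      · exact hw
      · exact hh x hx
    · push_neg at hw
      obtain ⟨k, hk⟩ := SeparatingDual.exists_ne_zero (R := ℝ) (hS w (Finset.mem_insert_self w S))
      have hev : ∀ᶠ t in 𝓝 (0:ℝ), ∀ x ∈ S, h x + t * k x ≠ 0 := by
        rw [eventually_all_finset]
        intro x hx
        have tend : Tendsto (fun t : ℝ => h x + t * k x) (𝓝 0) (𝓝 (h x)) := by
          have : Continuous fun t : ℝ => h x + t * k x :=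
            continuous_const.add (continuous_id.mul continuous_const)
          simpa using this.tendsto 0
        exact tend.eventually_ne (hh x hx)
      obtain ⟨t, ht, htne⟩ :=
        ((hev.filter_mono nhdsWithin_le_nhds).and
          (eventually_mem_nhdsWithin (s := {(0:ℝ)}ᶜ) (a := (0:ℝ)))).exists
      refine ⟨h + t • k, fun x hx => ?_⟩
      rcases Finset.mem_insert.mp hx with rfl | hx
      · simp only [ContinuousLinearMap.add_apply, ContinuousLinearMap.coe_smul',
          Pi.smul_apply, smul_eq_mul, hw, zero_add]
        exact mul_ne_zero (by simpa using htne) hk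
      · simpa using ht x hx

/-- Above any dual face there is a dual chamber. -/
lemma exists_dualChamber {V : Type*} [NormedAddCommGroup V] [NormedSpace ℝ V]
    [FiniteDimensional ℝ V] (H : Finset (Submodule ℝ V)) (f₀ : V →L[ℝ] ℝ) :
    ∃ B : Set (V →L[ℝ] ℝ), IsDualChamber H B ∧ {g | DualSameFace H f₀ g} ⊆ closure B := by
  classical
  set Lset : Finset (Submodule ℝ V) :=
    (H.powerset.image fun J => J.inf id).filter
      (fun l => Module.finrank ℝ (l : Submodule ℝ V) = 1) with hLset
  have hmem : ∀ l : Submodule ℝ V,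
      l ∈ Lset ↔ (IsFlat H l ∧ Module.finrank ℝ l = 1) := by
    intro l
    simp only [hLset, Finset.mem_filter, Finset.mem_image, Finset.mem_powerset, IsFlat]
    constructor
    · rintro ⟨⟨J, hJ, rfl⟩, hr⟩; exact ⟨⟨J, hJ, rfl⟩, hr⟩
    · rintro ⟨⟨J, hJ, rfl⟩, hr⟩; exact ⟨⟨J, hJ, rfl⟩, hr⟩
  choose! v hv1 hv2 hv3 using
    fun l (hl : l ∈ Lset) => gen_of_finrank_one l ((hmem l).mp hl).2
  have key : ∀ f g : V →L[ℝ] ℝ,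
      (∀ l ∈ Lset, 0 < f (v l) * g (v l) ∨ (f (v l) = 0 ∧ g (v l) = 0)) →
      DualSameFace H f g := by
    intro f g hfg l hflat hrank x hx
    have hl : l ∈ Lset := (hmem l).mpr ⟨hflat, hrank⟩
    obtain ⟨c, rfl⟩ := hv3 l hl x hx
    rcases eq_or_ne c 0 with rfl | hc
    · right; simp
    rcases hfg l hl with hpos | ⟨h1, h2⟩
    · left
      have heq : f (c • v l) * g (c • v l) = (c * c) * (f (v l) * g (v l)) := by
        simp [map_smul]; ring
      rw [heq]
      exact mul_pos (mul_self_pos.mpr hc) hpos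
    · right; simp [map_smul, h1, h2]
  obtain ⟨h, hh⟩ := exists_functional_ne (Lset.image v) (by
    intro w hw
    obtain ⟨l, hl, rfl⟩ := Finset.mem_image.mp hw
    exact hv2 l hl)
  have hh' : ∀ l ∈ Lset, h (v l) ≠ 0 := fun l hl => hh _ (Finset.mem_image_of_mem v hl)
  have hev : ∀ᶠ t in 𝓝[>] (0:ℝ), ∀ l ∈ Lset,
      (f₀ (v l) ≠ 0 → 0 < f₀ (v l) * (f₀ (v l) + t * h (v l))) ∧
      (f₀ (v l) + t * h (v l)) ≠ 0 := by
    rw [eventually_all_finset]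
    intro l hl
    by_cases h0 : f₀ (v l) = 0
    · filter_upwards [eventually_mem_nhdsWithin] with t ht
      refine ⟨fun hcon => absurd h0 hcon, ?_⟩
      rw [h0, zero_add]
      exact mul_ne_zero (ne_of_gt ht) (hh' l hl)
    · have tend : Tendsto (fun t : ℝ => f₀ (v l) * (f₀ (v l) + t * h (v l)))
          (𝓝[>] 0) (𝓝 (f₀ (v l) * f₀ (v l))) := by
        have cont : Continuous fun t : ℝ => f₀ (v l) * (f₀ (v l) + t * h (v l)) :=
          continuous_const.mul (continuous_const.add (continuous_id.mul continuous_const))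
        exact Tendsto.mono_left (by simpa using cont.tendsto 0) nhdsWithin_le_nhds
      have hev2 : ∀ᶠ t in 𝓝[>] (0:ℝ),
          0 < f₀ (v l) * (f₀ (v l) + t * h (v l)) :=
        tend.eventually (eventually_gt_nhds (mul_self_pos.mpr h0))
      filter_upwards [hev2] with t ht2
      refine ⟨fun _ => ht2, fun hz => by rw [hz, mul_zero] at ht2; exact lt_irrefl 0 ht2⟩
  obtain ⟨t, ht⟩ := hev.exists
  set g : V →L[ℝ] ℝ := f₀ + t • h with hg
  have hgval : ∀ l, g (v l) = f₀ (v l) + t * h (v l) := by intro l; simp [hg]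
  have hgne : ∀ l ∈ Lset, g (v l) ≠ 0 := fun l hl => by rw [hgval l]; exact (ht l hl).2
  have hsign : ∀ l ∈ Lset, f₀ (v l) ≠ 0 → 0 < f₀ (v l) * g (v l) :=
    fun l hl h0 => by rw [hgval l]; exact (ht l hl).1 h0
  refine ⟨{k | DualSameFace H g k}, ⟨⟨g, rfl⟩, ?_⟩, ?_⟩
  · have hBeq : {k : V →L[ℝ] ℝ | DualSameFace H g k} =
        ⋂ l ∈ Lset, {k : V →L[ℝ] ℝ | 0 < g (v l) * k (v l)} := by
      ext k
      simp only [Set.mem_iInter, Set.mem_setOf_eq]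
      constructor
      · intro hk l hl
        rcases hk l ((hmem l).mp hl).1 ((hmem l).mp hl).2 (v l) (hv1 l hl) with hp | ⟨h1, _⟩
        · exact hp
        · exact absurd h1 (hgne l hl)
      · intro hk
        exact key g k (fun l hl => Or.inl (hk l hl))
    rw [hBeq]
    apply isOpen_biInter_finset
    intro l _
    exact isOpen_lt continuous_const
      (continuous_const.mul (ContinuousLinearMap.apply ℝ ℝ (v l)).continuous)
  · intro a ha
    simp only [Set.mem_setOf_eq] at ha
    have tendsto : Tendsto (fun s : ℝ => a + s • g) (𝓝[>] 0) (𝓝 a) := by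
      have cont : Continuous fun s : ℝ => a + s • g :=
        continuous_const.add (continuous_id.smul continuous_const)
      exact Tendsto.mono_left (by simpa using cont.tendsto 0) nhdsWithin_le_nhds
    apply mem_closure_of_tendsto tendsto
    filter_upwards [eventually_mem_nhdsWithin] with s hs
    have hs' : (0:ℝ) < s := hs
    show DualSameFace H g (a + s • g)
    apply key
    intro l hl
    left
    have hval : (a + s • g) (v l) = a (v l) + s * g (v l) := by simp
    rw [hval]
    by_cases h0 : f₀ (v l) = 0
    · have ha0 : a (v l) = 0 := by
        rcases ha l ((hmem l).mp hl).1 ((hmem l).mp hl).2 (v l) (hv1 l hl) with hp | ⟨_, h2⟩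
        · rw [h0, zero_mul] at hp; exact absurd hp (lt_irrefl 0)
        · exact h2
      rw [ha0, zero_add]
      nlinarith [mul_self_pos.mpr (hgne l hl), hs']
    · have h1 := hsign l hl h0
      have h2 : 0 < f₀ (v l) * a (v l) := by
        rcases ha l ((hmem l).mp hl).1 ((hmem l).mp hl).2 (v l) (hv1 l hl) with hp | ⟨hz, _⟩
        · exact hp
        · exact absurd hz h0
      have hag : 0 < a (v l) * g (v l) := by
        nlinarith [mul_pos h1 h2, mul_self_pos.mpr h0]
      nlinarith [hag, mul_self_pos.mpr (hgne l hl), hs']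

/-- the small dual cone `V(A∨)` of a dual face is a closed convex
cone containing no line: `V(A∨) ∩ (−V(A∨)) = {0}`. -/
theorem statement11 {V : Type*} [NormedAddCommGroup V] [NormedSpace ℝ V]
    [FiniteDimensional ℝ V] (H : Finset (Submodule ℝ V))
    (hHyp : ∀ W ∈ H, ∃ f : V →ₗ[ℝ] ℝ, f ≠ 0 ∧ LinearMap.ker f = W)
    (hEss : (⋂ W ∈ H, (W : Set V)) = {0})
    (A : Set (V →L[ℝ] ℝ)) (hA : IsDualFace H A) :
    IsClosed (smallCone H A) ∧ Convex ℝ (smallCone H A) ∧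
    (∀ c : ℝ, 0 < c → ∀ x ∈ smallCone H A, c • x ∈ smallCone H A) ∧
    smallCone H A ∩ {x : V | -x ∈ smallCone H A} = {0} := by
  constructor
  · rw [smallCone]
    refine isClosed_biInter fun B _ => ?_
    have hBC : bigCone B = ⋂ f ∈ B, (f : V → ℝ) ⁻¹' Set.Ici 0 := by
      ext x; simp [bigCone]
    rw [hBC]
    exact isClosed_biInter fun f _ => IsClosed.preimage f.continuous isClosed_Ici
  refine ⟨?_, ?_, ?_⟩
  · intro x hx y hy a b ha hb hab
    simp only [smallCone, Set.mem_iInter] at hx hy ⊢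
    intro B hB f hf
    have h1 := hx B hB f hf
    have h2 := hy B hB f hf
    have : f (a • x + b • y) = a * f x + b * f y := by
      simp [map_add, map_smul]
    rw [this]
    exact add_nonneg (mul_nonneg ha h1) (mul_nonneg hb h2)
  · intro c hc x hx
    simp only [smallCone, Set.mem_iInter] at hx ⊢
    intro B hB f hf
    have h1 := hx B hB f hf
    rw [map_smul, smul_eq_mul]
    exact mul_nonneg hc.le h1
  · ext x
    simp only [Set.mem_inter_iff, Set.mem_setOf_eq, Set.mem_singleton_iff]
    constructor
    · rintro ⟨hx, hnx⟩
      obtain ⟨f₀, rfl⟩ := hA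
      obtain ⟨B, hB, hsub⟩ := exists_dualChamber H f₀
      simp only [smallCone, Set.mem_iInter, Set.mem_setOf_eq] at hx hnx
      have hxB := hx B ⟨hB, hsub⟩
      have hnxB := hnx B ⟨hB, hsub⟩
      have hzero : ∀ f ∈ B, f x = 0 := by
        intro f hf
        have h1 := hxB f hf
        have h2 := hnxB f hf
        rw [map_neg] at h2
        linarith
      by_contra hx0
      obtain ⟨k, hk⟩ := SeparatingDual.exists_ne_zero (R := ℝ) hx0
      obtain ⟨⟨g, rfl⟩, hopen⟩ := hB
      have hgB : DualSameFace H g g := by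
        intro l _ _ y _
        rcases eq_or_ne (g y) 0 with hz | hz
        · exact Or.inr ⟨hz, hz⟩
        · exact Or.inl (mul_self_pos.mpr hz)
      have tend : Filter.Tendsto (fun t : ℝ => g + t • k) (𝓝 0)
          (𝓝 g) := by
        have cont : Continuous fun t : ℝ => g + t • k :=
          continuous_const.add (continuous_id.smul continuous_const)
        simpa using cont.tendsto 0
      have hev : ∀ᶠ t in 𝓝 (0:ℝ), (g + t • k) ∈ {k | DualSameFace H g k} :=
        tend.eventually (hopen.eventually_mem hgB)
      obtain ⟨t, htB, htne⟩ :=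
        ((hev.filter_mono nhdsWithin_le_nhds).and
          (eventually_mem_nhdsWithin (s := {(0:ℝ)}ᶜ) (a := (0:ℝ)))).exists
      have h1 : (g + t • k) x = 0 := hzero _ htB
      have h2 : g x = 0 := hzero g hgB
      simp only [ContinuousLinearMap.add_apply, ContinuousLinearMap.coe_smul',
        Pi.smul_apply, smul_eq_mul, h2, zero_add] at h1
      exact hk (by
        rcases mul_eq_zero.mp h1 with h | h
        · exact absurd h (by simpa using htne)
        · exact h)
    · rintro rfl
      refine ⟨?_, ?_⟩ <;>
        · simp only [smallCone, Set.mem_iInter, Set.mem_setOf_eq]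
          intro B _ f _
          simp
end

section
/- (Openness and convexity of the star of a face.) Let H be a central essential arrangement in a finite-dimensional real vector space V. For every face A of H, the star of A, namely the union ⋃{B : B a face of H with A ≤ B}, is an open convex subset of V stable under multiplication by positive real scalars. -/
/-! The star of the face of `x` is cut out by sign conditions: a point `y` lies in it exactly
when every hyperplane of `H` not containing `x` has `x` and `y` strictly on the same side.
Indeed the closure of the face of `z` consists of the points that, for each hyperplane, lie on
it or strictly on the side of `z`, as one sees by letting `y + t • z` tend to `y`. The sign
description is an intersection of finitely many open half-spaces (the half-space for `W`
does not depend on the functional chosen to cut out `W`, since two functionals with the same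
kernel are proportional), hence open, convex and stable under positive scalars. -/

open Filter Topology LinearMap

lemma mul_pos_of_mul_pos_of_mul_pos {a b c : ℝ} (hab : 0 < a * b) (hac : 0 < a * c) :
    0 < b * c := by
  nlinarith [mul_pos hab hac, mul_self_nonneg a]

lemma mul_pos_iff_of_ker_eq {V : Type*} [AddCommGroup V] [Module ℝ V]
    {f g : V →ₗ[ℝ] ℝ} (hfg : ker f = ker g) {x : V} (hx : f x ≠ 0) (y : V) :
    0 < f x * f y ↔ 0 < g x * g y := by
  obtain ⟨a, rfl⟩ : ∃ a : ℝ, a • g = f := by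
    have hspan := mem_span_of_iInf_ker_le_ker (L := fun _ : Unit => g) (K := f)
      (by simp [hfg])
    rwa [Set.range_const, Submodule.mem_span_singleton] at hspan
  have ha : a ≠ 0 := by rintro rfl; simp at hx
  simp only [LinearMap.smul_apply, smul_eq_mul]
  rw [show a * g x * (a * g y) = (a * a) * (g x * g y) by ring]
  exact mul_pos_iff_of_pos_left (mul_self_pos.2 ha)

lemma SameFace.refl {V : Type*} [AddCommGroup V] [Module ℝ V]
    (H : Finset (Submodule ℝ V)) (x : V) : SameFace H x x := by
  intro W _ f _
  by_cases h : f x = 0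
  · exact Or.inr ⟨h, h⟩
  · exact Or.inl (mul_self_pos.2 h)

def starCone {V : Type*} [AddCommGroup V] [Module ℝ V]
    (H : Finset (Submodule ℝ V)) (x : V) : Set V :=
  {y | ∀ W ∈ H, ∀ f : V →ₗ[ℝ] ℝ, ker f = W → f x ≠ 0 → 0 < f x * f y}

section starCone

variable {V : Type*} [AddCommGroup V] [Module ℝ V] (H : Finset (Submodule ℝ V))

lemma SameFace.starCone_subset {x a : V} (hxa : SameFace H x a) :
    starCone H x ⊆ starCone H a := by
  intro y hy W hW f hf ha
  have hxa : 0 < f x * f a := (hxa W hW f hf).resolve_right fun h ↦ ha h.2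
  have hx : f x ≠ 0 := by rintro h; simp [h] at hxa
  exact mul_pos_of_mul_pos_of_mul_pos hxa (hy W hW f hf hx)

lemma SameFace.mem_starCone {x z y : V} (hz : z ∈ starCone H x) (hzy : SameFace H z y) :
    y ∈ starCone H x := by
  intro W hW f hf hx
  have hxz := hz W hW f hf hx
  have hz0 : f z ≠ 0 := by rintro h; simp [h] at hxz
  have hzy : 0 < f z * f y := (hzy W hW f hf).resolve_right fun h ↦ hz0 h.1
  exact mul_pos_of_mul_pos_of_mul_pos (by rwa [mul_comm]) hzy

lemma convex_starCone (x : V) : Convex ℝ (starCone H x) := by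
  intro y hy z hz p q hp hq hpq W hW f hf hx
  have hfy := hy W hW f hf hx
  have hfz := hz W hW f hf hx
  simp only [map_add, map_smul, smul_eq_mul]
  rcases hp.lt_or_eq with hp | rfl
  · nlinarith [mul_pos hp hfy, mul_nonneg hq hfz.le]
  · nlinarith [mul_pos (by linarith : (0 : ℝ) < q) hfz]

lemma smul_mem_starCone {x y : V} (hy : y ∈ starCone H x) {c : ℝ} (hc : 0 < c) :
    c • y ∈ starCone H x := by
  intro W hW f hf hx
  rw [map_smul, smul_eq_mul, mul_left_comm]
  exact mul_pos hc (hy W hW f hf hx)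

variable [TopologicalSpace V] [IsTopologicalAddGroup V] [ContinuousSMul ℝ V] [T2Space V]
  [FiniteDimensional ℝ V]

lemma isOpen_starCone (x : V) : IsOpen (starCone H x) := by
  have hinter : starCone H x =
      ⋂ W ∈ H, {y | ∀ f : V →ₗ[ℝ] ℝ, ker f = W → f x ≠ 0 → 0 < f x * f y} := by
    ext y; simp [starCone]
  rw [hinter]
  refine isOpen_biInter_finset fun W _ ↦ ?_
  by_cases hW : ∃ f₀ : V →ₗ[ℝ] ℝ, ker f₀ = W ∧ f₀ x ≠ 0
  · obtain ⟨f₀, hf₀, hx₀⟩ := hW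
    have hhalf : {y | ∀ f : V →ₗ[ℝ] ℝ, ker f = W → f x ≠ 0 → 0 < f x * f y} =
        {y | 0 < f₀ x * f₀ y} := by
      ext y
      refine ⟨fun h ↦ h f₀ hf₀ hx₀, fun h f hf hx ↦ ?_⟩
      exact (mul_pos_iff_of_ker_eq (hf.trans hf₀.symm) hx y).2 h
    rw [hhalf]
    exact isOpen_lt continuous_const (continuous_const.mul f₀.continuous_of_finiteDimensional)
  · push Not at hW
    convert isOpen_univ
    exact Set.eq_univ_of_forall fun y f hf hx ↦ absurd (hW f hf) hx

lemma mem_closure_face_iff {y z : V} :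
    y ∈ closure {w | SameFace H z w} ↔ z ∈ starCone H y := by
  constructor
  · intro hy W hW f hf hfy
    have hcont : Continuous f := f.continuous_of_finiteDimensional
    have hsign : 0 ≤ f z * f y := by
      refine closure_minimal (fun w hw ↦ ?_)
        (isClosed_le continuous_const (continuous_const.mul hcont)) hy
      rcases hw W hW f hf with h | h
      · exact h.le
      · simp [h.2]
    have hz : f z ≠ 0 := by
      intro h0
      refine hfy (closure_minimal (fun w hw ↦ ?_) (isClosed_eq hcont continuous_const) hy)
      rcases hw W hW f hf with h | h
      · simp [h0] at h
      · exact h.2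
    rw [mul_comm]
    exact hsign.lt_of_ne (mul_ne_zero hz hfy).symm
  · intro hz
    have hpath : Tendsto (fun t : ℝ ↦ y + t • z) (𝓝[>] 0) (𝓝 y) := by
      have hcont : Continuous fun t : ℝ ↦ y + t • z := by fun_prop
      simpa using (hcont.tendsto 0).mono_left nhdsWithin_le_nhds
    refine mem_closure_of_tendsto hpath (eventually_nhdsWithin_of_forall fun t (ht : 0 < t) ↦ ?_)
    intro W hW f hf
    rw [map_add, map_smul, smul_eq_mul]
    by_cases hz0 : f z = 0
    · have hy0 : f y = 0 := by
        by_contra hy0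
        simpa [hz0] using hz W hW f hf hy0
      simp [hz0, hy0]
    · have hzy : 0 ≤ f z * f y := by
        by_cases hy0 : f y = 0
        · simp [hy0]
        · rw [mul_comm]; exact (hz W hW f hf hy0).le
      left
      nlinarith [mul_pos ht (mul_self_pos.2 hz0)]

lemma face_subset_closure_face_iff {x y : V} :
    {w | SameFace H x w} ⊆ closure {w | SameFace H y w} ↔ y ∈ starCone H x := by
  simp_rw [Set.subset_def, Set.mem_ofPred_eq, mem_closure_face_iff]
  exact ⟨fun h ↦ h x (SameFace.refl H x), fun h a ha ↦ ha.starCone_subset H h⟩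

lemma sUnion_isFace_subset_closure_eq_starCone (x : V) :
    ⋃₀ {B : Set V | IsFace H B ∧ {w | SameFace H x w} ⊆ closure B} = starCone H x := by
  ext y
  constructor
  · rintro ⟨_, ⟨⟨z, rfl⟩, hxz⟩, hzy⟩
    exact SameFace.mem_starCone H ((face_subset_closure_face_iff H).1 hxz) hzy
  · intro hy
    exact ⟨_, ⟨⟨y, rfl⟩, (face_subset_closure_face_iff H).2 hy⟩, SameFace.refl H y⟩

end starCone

theorem statement15_general {V : Type*} [NormedAddCommGroup V] [NormedSpace ℝ V]
    [FiniteDimensional ℝ V] (H : Finset (Submodule ℝ V))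
    (A : Set V) (hA : IsFace H A) :
    IsOpen (⋃₀ {B : Set V | IsFace H B ∧ A ⊆ closure B}) ∧
    Convex ℝ (⋃₀ {B : Set V | IsFace H B ∧ A ⊆ closure B}) ∧
    ∀ c : ℝ, 0 < c → ∀ x ∈ ⋃₀ {B : Set V | IsFace H B ∧ A ⊆ closure B},
      c • x ∈ ⋃₀ {B : Set V | IsFace H B ∧ A ⊆ closure B} := by
  obtain ⟨x, rfl⟩ := hA
  rw [sUnion_isFace_subset_closure_eq_starCone]
  exact ⟨isOpen_starCone H x, convex_starCone H x, fun c hc y hy ↦ smul_mem_starCone H hy hc⟩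

/-- the star of a face `A` of a central essential arrangement,
i.e. the union of all faces `B` with `A ≤ B`, is open, convex, and stable
under multiplication by positive scalars. -/
theorem statement15 {V : Type*} [NormedAddCommGroup V] [NormedSpace ℝ V]
    [FiniteDimensional ℝ V] (H : Finset (Submodule ℝ V))
    (hHyp : ∀ W ∈ H, ∃ f : V →ₗ[ℝ] ℝ, f ≠ 0 ∧ LinearMap.ker f = W)
    (hEss : (⋂ W ∈ H, (W : Set V)) = {0})
    (A : Set V) (hA : IsFace H A) :
    IsOpen (⋃₀ {B : Set V | IsFace H B ∧ A ⊆ closure B}) ∧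
    Convex ℝ (⋃₀ {B : Set V | IsFace H B ∧ A ⊆ closure B}) ∧
    ∀ c : ℝ, 0 < c → ∀ x ∈ ⋃₀ {B : Set V | IsFace H B ∧ A ⊆ closure B},
      c • x ∈ ⋃₀ {B : Set V | IsFace H B ∧ A ⊆ closure B} :=
  statement15_general H A hA
end

section
/- Let L be a flat of the central essential arrangement H. Then for every face A of H, the set cl(A) ∩ L (the intersection of the closure of A with L) is the closure of a unique face of the induced arrangement H∩L in L. -/
/-!
The closure of the face of `x` is cut out by the conditions "`f y = 0`, or `f y` has the sign
of `f x`", one for each hyperplane `ker f`; so `cl(A) ∩ L` is an additive cone `C` in `L`.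
Adding up, over the hyperplanes `W`, one point of `C` off `W` (when there is one) yields a
point `z ∈ C` off every hyperplane not containing `C`, and the closure of the face of `z` in
the induced arrangement is then exactly `C`. Uniqueness holds because two faces whose closures
contain each other's points coincide.
-/

open Filter Topology

lemma isClosed_setOf_pos_mul_or_eq_zero (a : ℝ) : IsClosed {t : ℝ | 0 < a * t ∨ t = 0} := by
  rcases eq_or_ne a 0 with rfl | ha
  · simp
  · have : {t : ℝ | 0 < a * t ∨ t = 0} = {t | 0 ≤ a * t} := Set.ext fun t =>
      ⟨fun h => h.elim le_of_lt fun h => by simp [h],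
        fun h => h.lt_or_eq.imp_right fun h => (mul_eq_zero.mp h.symm).resolve_left ha⟩
    rw [this]
    exact isClosed_le continuous_const (continuous_const_mul a)

lemma pos_mul_or_eq_zero_of_ker_le {M : Type*} [AddCommGroup M] [Module ℝ M]
    {f g : M →ₗ[ℝ] ℝ} (hfg : LinearMap.ker f ≤ LinearMap.ker g) {x y : M}
    (h : 0 < f x * f y ∨ f y = 0) : 0 < g x * g y ∨ g y = 0 := by
  have hg : g ∈ Submodule.span ℝ {f} := by
    simpa using mem_span_of_iInf_ker_le_ker (L := fun _ : Unit => f) (by simpa using hfg)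
  obtain ⟨c, rfl⟩ := Submodule.mem_span_singleton.mp hg
  rcases eq_or_ne c 0 with rfl | hc
  · simp
  · simp only [LinearMap.smul_apply, smul_eq_mul, mul_eq_zero, hc, false_or]
    rcases h with h | h
    · left; nlinarith [mul_self_pos.mpr hc]
    · exact Or.inr h

section Algebraic

variable {M : Type*} [AddCommGroup M] [Module ℝ M] {G : Finset (Submodule ℝ M)}

lemma SameFace.symm {x y : M} (h : SameFace G x y) : SameFace G y x := by
  intro W hW f hf
  rcases h W hW f hf with h | h
  · exact Or.inl (by rwa [mul_comm])
  · exact Or.inr h.symm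

lemma SameFace.trans {x y z : M} (hxy : SameFace G x y) (hyz : SameFace G y z) :
    SameFace G x z := by
  intro W hW f hf
  rcases hxy W hW f hf with h₁ | h₁ <;> rcases hyz W hW f hf with h₂ | h₂
  · exact Or.inl (by nlinarith [mul_pos h₁ h₂, sq_nonneg (f y)])
  · simp [h₂.1] at h₁
  · simp [h₁.2] at h₂
  · exact Or.inr ⟨h₁.1, h₂.2⟩

variable (G) in
def closedFace (x : M) : AddSubmonoid M where
  carrier := {y | ∀ W ∈ G, ∀ f : M →ₗ[ℝ] ℝ, LinearMap.ker f = W → 0 < f x * f y ∨ f y = 0}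
  zero_mem' := by simp
  add_mem' := by
    intro y z hy hz W hW f hf
    rw [map_add]
    rcases hy W hW f hf with h₁ | h₁ <;> rcases hz W hW f hf with h₂ | h₂
    · exact Or.inl (by nlinarith)
    · exact Or.inl (by simpa [h₂] using h₁)
    · exact Or.inl (by simpa [h₁] using h₂)
    · exact Or.inr (by simp [h₁, h₂])

lemma mem_closedFace_iff {x y : M} : y ∈ closedFace G x ↔
    ∀ W ∈ G, ∀ f : M →ₗ[ℝ] ℝ, LinearMap.ker f = W → 0 < f x * f y ∨ f y = 0 :=
  Iff.rfl

lemma mem_closedFace_self (x : M) : x ∈ closedFace G x := fun _ _ f _ =>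
  (eq_or_ne (f x) 0).elim Or.inr fun h => Or.inl (mul_self_pos.mpr h)

lemma mem_closedFace_trans {x y z : M} (hy : y ∈ closedFace G x) (hz : z ∈ closedFace G y) :
    z ∈ closedFace G x := by
  intro W hW f hf
  refine (hz W hW f hf).imp_left fun hyz => ?_
  have hxy : 0 < f x * f y := (hy W hW f hf).resolve_right fun h => by simp [h] at hyz
  nlinarith [mul_pos hxy hyz, sq_nonneg (f y)]

lemma sameFace_of_mem_closedFace {x y : M} (hy : y ∈ closedFace G x) (hx : x ∈ closedFace G y) :
    SameFace G x y := by
  intro W hW f hf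
  rcases hy W hW f hf with h | hy0
  · exact Or.inl h
  · rcases hx W hW f hf with h | hx0
    · simp [hy0] at h
    · exact Or.inr ⟨hx0, hy0⟩

/-- Take the sum of one witness for each hyperplane. -/
lemma exists_mem_pos_mul_of_le_closedFace {x : M} (S : AddSubmonoid M)
    (hS : S ≤ closedFace G x) : ∃ z ∈ S, ∀ W ∈ G, ∀ f : M →ₗ[ℝ] ℝ, LinearMap.ker f = W →
      (∃ p ∈ S, p ∉ W) → 0 < f x * f z := by
  have hpick : ∀ W : Submodule ℝ M, ∃ p ∈ S, (∃ q ∈ S, q ∉ W) → p ∉ W := by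
    intro W
    by_cases h : ∃ q ∈ S, q ∉ W
    · obtain ⟨q, hq, hqW⟩ := h
      exact ⟨q, hq, fun _ => hqW⟩
    · exact ⟨0, S.zero_mem, fun h' => absurd h' h⟩
  choose pick hpickS hpickW using hpick
  refine ⟨∑ W ∈ G, pick W, sum_mem fun W _ => hpickS W, fun W hW f hf hex => ?_⟩
  rw [map_sum, Finset.mul_sum]
  refine Finset.sum_pos' (fun W' _ => ?_) ⟨W, hW, ?_⟩
  · rcases hS (hpickS W') W hW f hf with h | h
    · exact h.le
    · simp [h]
  · refine (hS (hpickS W) W hW f hf).resolve_right fun h => hpickW W hex ?_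
    have hker : pick W ∈ LinearMap.ker f := h
    rwa [hf] at hker

lemma exists_mem_forall_mem_closedFace_iff (L : Submodule ℝ M) (x : M) :
    ∃ z ∈ L, ∀ p ∈ L, p ∈ closedFace G z ↔ p ∈ closedFace G x := by
  obtain ⟨z, ⟨hzx, hzL⟩, hz⟩ :=
    exists_mem_pos_mul_of_le_closedFace (closedFace G x ⊓ L.toAddSubmonoid) inf_le_left
  refine ⟨z, hzL, fun p hpL => ⟨fun hp => mem_closedFace_trans hzx hp, fun hp W hW f hf => ?_⟩⟩
  refine (hp W hW f hf).imp_left fun hxp => ?_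
  have hxz : 0 < f x * f z := hz W hW f hf ⟨p, ⟨hp, hpL⟩, fun hpW => by
    rw [← hf] at hpW; simp [LinearMap.mem_ker.mp hpW] at hxp⟩
  nlinarith [mul_pos hxz hxp, sq_nonneg (f x)]

lemma mem_closedFace_induced_iff (hG : ∀ W ∈ G, ∃ f : M →ₗ[ℝ] ℝ, LinearMap.ker f = W)
    {L : Submodule ℝ M} {GInd : Finset (Submodule ℝ L)}
    (hGInd : ∀ W : Submodule ℝ L, W ∈ GInd ↔ ∃ W' ∈ G, ¬ L ≤ W' ∧ W = W'.comap L.subtype)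
    (z p : L) : p ∈ closedFace GInd z ↔ (p : M) ∈ closedFace G z := by
  constructor
  · intro hp W hW f hf
    by_cases hLW : L ≤ W
    · exact Or.inr (LinearMap.mem_ker.mp (hf ▸ hLW p.2))
    · exact hp _ ((hGInd _).2 ⟨W, hW, hLW, rfl⟩) (f ∘ₗ L.subtype) (by rw [LinearMap.ker_comp, hf])
  · intro hp W' hW' g hg
    obtain ⟨W, hW, -, rfl⟩ := (hGInd W').1 hW'
    obtain ⟨f, hf⟩ := hG W hW
    refine pos_mul_or_eq_zero_of_ker_le (f := f ∘ₗ L.subtype) ?_ (hp W hW f hf)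
    rw [hg, LinearMap.ker_comp, hf]

end Algebraic

section Topological

variable {M : Type*} [NormedAddCommGroup M] [NormedSpace ℝ M] [FiniteDimensional ℝ M]
  {G : Finset (Submodule ℝ M)}

lemma isClosed_closedFace (x : M) : IsClosed (closedFace G x : Set M) := by
  have : (closedFace G x : Set M) = ⋂ W ∈ G, ⋂ (f : M →ₗ[ℝ] ℝ) (_ : LinearMap.ker f = W),
      f ⁻¹' {t | 0 < f x * t ∨ t = 0} := by
    ext y
    simp [mem_closedFace_iff]
  rw [this]
  exact isClosed_biInter fun W _ => isClosed_iInter fun f => isClosed_iInter fun _ =>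
    (isClosed_setOf_pos_mul_or_eq_zero _).preimage f.continuous_of_finiteDimensional

/-- For `y` in `closedFace G x`, every `y + t • x` with `t > 0` lies in the face of `x`. -/
lemma closure_setOf_sameFace (x : M) :
    closure {y | SameFace G x y} = closedFace G x := by
  refine (closure_minimal (fun y hy W hW f hf => (hy W hW f hf).imp_right And.right)
    (isClosed_closedFace x)).antisymm fun y hy => ?_
  have hseg : ∀ t : ℝ, 0 < t → SameFace G x (y + t • x) := by
    intro t ht W hW f hf
    simp only [map_add, map_smul, smul_eq_mul]
    rcases hy W hW f hf with h | h
    · exact Or.inl (by nlinarith [mul_nonneg ht.le (mul_self_nonneg (f x))])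
    · rcases eq_or_ne (f x) 0 with hx | hx
      · exact Or.inr ⟨hx, by simp [h, hx]⟩
      · exact Or.inl (by rw [h]; nlinarith [mul_self_pos.mpr hx])
  have hlim : Tendsto (fun t : ℝ => y + t • x) (𝓝[>] 0) (𝓝 y) :=
    (Continuous.tendsto' (by fun_prop) 0 y (by simp)).mono_left nhdsWithin_le_nhds
  exact mem_closure_of_tendsto hlim (eventually_nhdsWithin_of_forall hseg)

lemma IsFace.eq_of_closure_eq {A B : Set M} (hA : IsFace G A) (hB : IsFace G B)
    (h : closure A = closure B) : A = B := by
  obtain ⟨x, rfl⟩ := hA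
  obtain ⟨y, rfl⟩ := hB
  rw [closure_setOf_sameFace, closure_setOf_sameFace, SetLike.coe_set_eq] at h
  have hxy : SameFace G x y := sameFace_of_mem_closedFace
    (by rw [h]; exact mem_closedFace_self y) (by rw [← h]; exact mem_closedFace_self x)
  ext z
  exact ⟨hxy.symm.trans, hxy.trans⟩

end Topological

theorem statement17_general {V : Type*} [NormedAddCommGroup V] [NormedSpace ℝ V]
    [FiniteDimensional ℝ V] (H : Finset (Submodule ℝ V))
    (hHyp : ∀ W ∈ H, ∃ f : V →ₗ[ℝ] ℝ, f ≠ 0 ∧ LinearMap.ker f = W)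
    (L : Submodule ℝ V)
    (Hind : Finset (Submodule ℝ ↥L))
    (hHind : ∀ W : Submodule ℝ ↥L, W ∈ Hind ↔
      ∃ W' ∈ H, ¬ L ≤ W' ∧ W = W'.comap L.subtype)
    (A : Set V) (hA : IsFace H A) :
    ∃! B : Set ↥L, IsFace Hind B ∧ closure B = {x : ↥L | (x : V) ∈ closure A} := by
  obtain ⟨x, rfl⟩ := hA
  obtain ⟨z, hzL, hz⟩ := exists_mem_forall_mem_closedFace_iff (G := H) L x
  have hclosure : closure {p : L | SameFace Hind ⟨z, hzL⟩ p} =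
      {p : L | (p : V) ∈ closure {y | SameFace H x y}} := by
    ext p
    simp only [closure_setOf_sameFace, SetLike.mem_coe, Set.mem_ofPred_eq,
      mem_closedFace_induced_iff (fun W hW => (hHyp W hW).imp fun _ => And.right) hHind,
      hz p p.2]
  exact ⟨_, ⟨⟨_, rfl⟩, hclosure⟩,
    fun B hB => hB.1.eq_of_closure_eq ⟨_, rfl⟩ (hB.2.trans hclosure.symm)⟩

/-- for a flat `L` of `H` and any face `A` of `H`, the set
`cl(A) ∩ L` is the closure of a unique face of the induced arrangement `H∩L`. -/
theorem statement17 {V : Type*} [NormedAddCommGroup V] [NormedSpace ℝ V]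
    [FiniteDimensional ℝ V] (H : Finset (Submodule ℝ V))
    (hHyp : ∀ W ∈ H, ∃ f : V →ₗ[ℝ] ℝ, f ≠ 0 ∧ LinearMap.ker f = W)
    (hEss : (⋂ W ∈ H, (W : Set V)) = {0})
    (L : Submodule ℝ V) (hL : IsFlat H L)
    (Hind : Finset (Submodule ℝ ↥L))
    (hHind : ∀ W : Submodule ℝ ↥L, W ∈ Hind ↔
      ∃ W' ∈ H, ¬ L ≤ W' ∧ W = W'.comap L.subtype)
    (A : Set V) (hA : IsFace H A) :
    ∃! B : Set ↥L, IsFace Hind B ∧ closure B = {x : ↥L | (x : V) ∈ closure A} :=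
  statement17_general H hHyp L Hind hHind A hA
end
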